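/- arXiv:2410.10040 — 7 statements merged into one kernel-verified Lean document; each statement's English description precedes it below -/
import Mathlib

section
/- Let α > 0 and let m : [0,α] → ℝ be continuous with m(0) = m(α) = 0, m(s) > 0 for all s ∈ (0,α), and m continuously differentiable on (0,α). Then there exist continuously differentiable functions m¹, m² : (0,α) → ℝ such that m¹ is positive and nondecreasing, m² is positive and nonincreasing, and m(s) = m¹(s)·m²(s) for all s ∈ (0,α). If, in addition, m is Lipschitz continuous on [0,α] and there is δ ∈ (0,α/2) such that m′(s) ≥ 0 for s ∈ (0,δ) and m′(s) ≤ 0 for s ∈ (α−δ,α), then m¹ and m² can be chosen so that they extend to Lipschitz continuous functions on [0,α] with m¹(0) = 0, m²(α) = 0 and m = m¹·m² on all of [0,α]. -/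
/-!
With `c ∈ (0, α)` fixed, `m¹ s = exp ∫_c^s (m'/m)⁺` is nondecreasing, and `m² = m / m¹` has
derivative `min(m', 0) / m¹ ≤ 0`. Symmetrically `m¹' = max(m', 0) / m²`. Under the extra
hypotheses `m¹'` vanishes on `(α - δ, α)` while `m²` is antitone, so
`|m¹'| ≤ K / m²(α - δ)`; likewise `|m²'| ≤ K / m¹(δ)`. Hence both factors are Lipschitz on
`(0, α)` and extend to Lipschitz functions on `ℝ`. Near `0` we have
`m¹ = m / m² ≤ m / m²(c) → 0`, and near `α`, `m² ≤ m / m¹(c) → 0`, which gives the boundary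
values.
-/

open Set Filter Topology

noncomputable def logDerivPosPart (m : ℝ → ℝ) (t : ℝ) : ℝ := max (deriv m t / m t) 0

noncomputable def monotoneFactor (m : ℝ → ℝ) (c s : ℝ) : ℝ :=
  Real.exp (∫ t in c..s, logDerivPosPart m t)

noncomputable def antitoneFactor (m : ℝ → ℝ) (c s : ℝ) : ℝ := m s / monotoneFactor m c s

lemma contDiffOn_one_of_hasDerivAt {f f' : ℝ → ℝ} {s : Set ℝ} (hs : IsOpen s)
    (hf : ∀ x ∈ s, HasDerivAt f (f' x) x) (hf' : ContinuousOn f' s) : ContDiffOn ℝ 1 f s := by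
  rw [show (1 : WithTop ℕ∞) = 0 + 1 from rfl, contDiffOn_succ_iff_deriv_of_isOpen hs,
    contDiffOn_zero]
  exact ⟨fun x hx => (hf x hx).differentiableAt.differentiableWithinAt, by simp,
    hf'.congr fun x hx => (hf x hx).deriv⟩

lemma lipschitzOnWith_of_abs_hasDerivAt_le {f f' : ℝ → ℝ} {s : Set ℝ} {C : ℝ}
    (hs : Convex ℝ s) (hf : ∀ x ∈ s, HasDerivAt f (f' x) x) (bound : ∀ x ∈ s, |f' x| ≤ C) :
    LipschitzOnWith C.toNNReal f s :=
  hs.lipschitzOnWith_of_nnnorm_hasDerivWithin_le (fun x hx => (hf x hx).hasDerivWithinAt)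
    fun x hx => (Real.le_toNNReal_iff_coe_le ((abs_nonneg _).trans (bound x hx))).2
      (by simpa using bound x hx)

lemma LipschitzOnWith.exists_lipschitzWith_eqOn_of_tendsto {X : Type*} [PseudoMetricSpace X]
    {f : X → ℝ} {s : Set X} {K : NNReal} {x : X} {y : ℝ} (hf : LipschitzOnWith K f s)
    (hx : x ∈ closure s) (hlim : Tendsto f (𝓝[s] x) (𝓝 y)) :
    ∃ g : X → ℝ, LipschitzWith K g ∧ EqOn f g s ∧ g x = y := by
  obtain ⟨g, hg, hfg⟩ := hf.extend_real
  have := mem_closure_iff_nhdsWithin_neBot.mp hx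
  exact ⟨g, hg, hfg, tendsto_nhds_unique hg.continuous.continuousAt.continuousWithinAt
    (hlim.congr' (eventuallyEq_nhdsWithin_of_eqOn hfg))⟩

section

variable {a b c : ℝ} {m : ℝ → ℝ}

lemma monotoneFactor_pos (m : ℝ → ℝ) (c s : ℝ) : 0 < monotoneFactor m c s := Real.exp_pos _

lemma antitoneFactor_pos {s : ℝ} (hs : 0 < m s) : 0 < antitoneFactor m c s :=
  div_pos hs (monotoneFactor_pos m c s)

lemma monotoneFactor_mul_antitoneFactor (m : ℝ → ℝ) (c s : ℝ) :
    monotoneFactor m c s * antitoneFactor m c s = m s :=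
  mul_div_cancel₀ _ (monotoneFactor_pos m c s).ne'

lemma continuousOn_logDerivPosPart (hm_pos : ∀ s ∈ Ioo a b, 0 < m s)
    (hm : ContDiffOn ℝ 1 m (Ioo a b)) : ContinuousOn (logDerivPosPart m) (Ioo a b) :=
  ContinuousOn.sup (f := fun t => deriv m t / m t)
    ((hm.continuousOn_deriv_of_isOpen isOpen_Ioo le_rfl).div hm.continuousOn
      fun s hs => (hm_pos s hs).ne') continuousOn_const

lemma hasDerivAt_integral_logDerivPosPart (hm_pos : ∀ s ∈ Ioo a b, 0 < m s)
    (hm : ContDiffOn ℝ 1 m (Ioo a b)) (hc : c ∈ Ioo a b) {x : ℝ} (hx : x ∈ Ioo a b) :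
    HasDerivAt (fun s => ∫ t in c..s, logDerivPosPart m t) (logDerivPosPart m x) x := by
  have hg := continuousOn_logDerivPosPart hm_pos hm
  exact intervalIntegral.integral_hasDerivAt_right
    (hg.mono (ordConnected_Ioo.uIcc_subset hc hx)).intervalIntegrable
    (hg.stronglyMeasurableAtFilter isOpen_Ioo x hx) (hg.continuousAt (isOpen_Ioo.mem_nhds hx))

lemma hasDerivAt_monotoneFactor (hm_pos : ∀ s ∈ Ioo a b, 0 < m s)
    (hm : ContDiffOn ℝ 1 m (Ioo a b)) (hc : c ∈ Ioo a b) {x : ℝ} (hx : x ∈ Ioo a b) :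
    HasDerivAt (monotoneFactor m c) (max (deriv m x) 0 / antitoneFactor m c x) x := by
  refine (hasDerivAt_integral_logDerivPosPart hm_pos hm hc hx).exp.congr_deriv ?_
  have hmx := hm_pos x hx
  rw [logDerivPosPart, ← zero_div (m x), max_div_div_right hmx.le, zero_div]
  simp only [antitoneFactor, monotoneFactor]
  field_simp

lemma hasDerivAt_antitoneFactor (hm_pos : ∀ s ∈ Ioo a b, 0 < m s)
    (hm : ContDiffOn ℝ 1 m (Ioo a b)) (hc : c ∈ Ioo a b) {x : ℝ} (hx : x ∈ Ioo a b) :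
    HasDerivAt (antitoneFactor m c) (min (deriv m x) 0 / monotoneFactor m c x) x := by
  have hm_x : HasDerivAt m (deriv m x) x :=
    ((hm.differentiableOn one_ne_zero).differentiableAt (isOpen_Ioo.mem_nhds hx)).hasDerivAt
  refine (hm_x.div (hasDerivAt_monotoneFactor hm_pos hm hc hx)
    (monotoneFactor_pos m c x).ne').congr_deriv ?_
  have hM := (monotoneFactor_pos m c x).ne'
  have hmx := (hm_pos x hx).ne'
  have hminmax := min_add_max (deriv m x) 0
  rw [antitoneFactor]
  field_simp
  linarith

lemma contDiffOn_monotoneFactor (hm_pos : ∀ s ∈ Ioo a b, 0 < m s)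
    (hm : ContDiffOn ℝ 1 m (Ioo a b)) (hc : c ∈ Ioo a b) :
    ContDiffOn ℝ 1 (monotoneFactor m c) (Ioo a b) :=
  (contDiffOn_one_of_hasDerivAt isOpen_Ioo
    (fun _ hx => hasDerivAt_integral_logDerivPosPart hm_pos hm hc hx)
    (continuousOn_logDerivPosPart hm_pos hm)).exp

lemma contDiffOn_antitoneFactor (hm_pos : ∀ s ∈ Ioo a b, 0 < m s)
    (hm : ContDiffOn ℝ 1 m (Ioo a b)) (hc : c ∈ Ioo a b) :
    ContDiffOn ℝ 1 (antitoneFactor m c) (Ioo a b) :=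
  hm.div (contDiffOn_monotoneFactor hm_pos hm hc) fun s _ => (monotoneFactor_pos m c s).ne'

lemma monotoneOn_monotoneFactor (hm_pos : ∀ s ∈ Ioo a b, 0 < m s)
    (hm : ContDiffOn ℝ 1 m (Ioo a b)) (hc : c ∈ Ioo a b) :
    MonotoneOn (monotoneFactor m c) (Ioo a b) := by
  refine monotoneOn_of_hasDerivWithinAt_nonneg
    (f' := fun x => max (deriv m x) 0 / antitoneFactor m c x) (convex_Ioo a b)
    (contDiffOn_monotoneFactor hm_pos hm hc).continuousOn ?_ ?_ <;> rw [interior_Ioo]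
  · exact fun x hx => (hasDerivAt_monotoneFactor hm_pos hm hc hx).hasDerivWithinAt
  · exact fun x hx => div_nonneg (le_max_right _ _) (antitoneFactor_pos (hm_pos x hx)).le

lemma antitoneOn_antitoneFactor (hm_pos : ∀ s ∈ Ioo a b, 0 < m s)
    (hm : ContDiffOn ℝ 1 m (Ioo a b)) (hc : c ∈ Ioo a b) :
    AntitoneOn (antitoneFactor m c) (Ioo a b) := by
  refine antitoneOn_of_hasDerivWithinAt_nonpos
    (f' := fun x => min (deriv m x) 0 / monotoneFactor m c x) (convex_Ioo a b)
    (contDiffOn_antitoneFactor hm_pos hm hc).continuousOn ?_ ?_ <;> rw [interior_Ioo]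
  · exact fun x hx => (hasDerivAt_antitoneFactor hm_pos hm hc hx).hasDerivWithinAt
  · exact fun x _ => div_nonpos_of_nonpos_of_nonneg (min_le_right _ _)
      (monotoneFactor_pos m c x).le

lemma tendsto_monotoneFactor_nhdsWithin_Ioo_left (hm_pos : ∀ s ∈ Ioo a b, 0 < m s)
    (hm : ContDiffOn ℝ 1 m (Ioo a b)) (hc : c ∈ Ioo a b)
    (hlim : Tendsto m (𝓝[Ioo a b] a) (𝓝 0)) :
    Tendsto (monotoneFactor m c) (𝓝[Ioo a b] a) (𝓝 0) := by
  have hc_pos := antitoneFactor_pos (c := c) (hm_pos c hc)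
  refine tendsto_of_tendsto_of_tendsto_of_le_of_le' tendsto_const_nhds
    (by simpa using hlim.div_const (antitoneFactor m c c))
    (Eventually.of_forall fun s => (monotoneFactor_pos m c s).le) ?_
  filter_upwards [inter_mem_nhdsWithin (Ioo a b) (Iio_mem_nhds hc.1)] with s ⟨hs, hsc⟩
  rw [le_div_iff₀ hc_pos, ← monotoneFactor_mul_antitoneFactor m c s]
  exact mul_le_mul_of_nonneg_left (antitoneOn_antitoneFactor hm_pos hm hc hs hc hsc.le)
    (monotoneFactor_pos m c s).le

lemma tendsto_antitoneFactor_nhdsWithin_Ioo_right (hm_pos : ∀ s ∈ Ioo a b, 0 < m s)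
    (hm : ContDiffOn ℝ 1 m (Ioo a b)) (hc : c ∈ Ioo a b)
    (hlim : Tendsto m (𝓝[Ioo a b] b) (𝓝 0)) :
    Tendsto (antitoneFactor m c) (𝓝[Ioo a b] b) (𝓝 0) := by
  have hc_pos := monotoneFactor_pos m c c
  refine tendsto_of_tendsto_of_tendsto_of_le_of_le' tendsto_const_nhds
    (by simpa using hlim.div_const (monotoneFactor m c c))
    (eventually_nhdsWithin_of_forall fun s hs => (antitoneFactor_pos (hm_pos s hs)).le) ?_
  filter_upwards [inter_mem_nhdsWithin (Ioo a b) (Ioi_mem_nhds hc.2)] with s ⟨hs, hcs⟩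
  rw [le_div_iff₀ hc_pos, ← monotoneFactor_mul_antitoneFactor m c s, mul_comm]
  exact mul_le_mul_of_nonneg_right (monotoneOn_monotoneFactor hm_pos hm hc hc hs hcs.le)
    (antitoneFactor_pos (hm_pos s hs)).le

lemma lipschitzOnWith_monotoneFactor (hm_pos : ∀ s ∈ Ioo a b, 0 < m s)
    (hm : ContDiffOn ℝ 1 m (Ioo a b)) (hc : c ∈ Ioo a b) {K : ℝ}
    (hK : ∀ x ∈ Ioo a b, |deriv m x| ≤ K) {d : ℝ} (hd : d ∈ Ioo a b)
    (hdecr : ∀ x ∈ Ioo d b, deriv m x ≤ 0) :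
    LipschitzOnWith (K / antitoneFactor m c d).toNNReal (monotoneFactor m c) (Ioo a b) := by
  refine lipschitzOnWith_of_abs_hasDerivAt_le (convex_Ioo a b)
    (fun x hx => hasDerivAt_monotoneFactor hm_pos hm hc hx) fun x hx => ?_
  have hK0 : 0 ≤ K := (abs_nonneg _).trans (hK d hd)
  have hdecr_x := antitoneFactor_pos (c := c) (hm_pos x hx)
  rw [abs_of_nonneg (div_nonneg (le_max_right _ _) hdecr_x.le)]
  rcases le_or_gt x d with hxd | hdx
  · exact div_le_div₀ hK0 (max_le ((le_abs_self _).trans (hK x hx)) hK0)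
      (antitoneFactor_pos (hm_pos d hd)) (antitoneOn_antitoneFactor hm_pos hm hc hx hd hxd)
  · rw [max_eq_right (hdecr x ⟨hdx, hx.2⟩), zero_div]
    exact div_nonneg hK0 (antitoneFactor_pos (hm_pos d hd)).le

lemma lipschitzOnWith_antitoneFactor (hm_pos : ∀ s ∈ Ioo a b, 0 < m s)
    (hm : ContDiffOn ℝ 1 m (Ioo a b)) (hc : c ∈ Ioo a b) {K : ℝ}
    (hK : ∀ x ∈ Ioo a b, |deriv m x| ≤ K) {d : ℝ} (hd : d ∈ Ioo a b)
    (hincr : ∀ x ∈ Ioo a d, 0 ≤ deriv m x) :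
    LipschitzOnWith (K / monotoneFactor m c d).toNNReal (antitoneFactor m c) (Ioo a b) := by
  refine lipschitzOnWith_of_abs_hasDerivAt_le (convex_Ioo a b)
    (fun x hx => hasDerivAt_antitoneFactor hm_pos hm hc hx) fun x hx => ?_
  have hK0 : 0 ≤ K := (abs_nonneg _).trans (hK d hd)
  rw [abs_div, abs_of_pos (monotoneFactor_pos m c x)]
  rcases lt_or_ge x d with hxd | hdx
  · rw [min_eq_right (hincr x ⟨hx.1, hxd⟩), abs_zero, zero_div]
    exact div_nonneg hK0 (monotoneFactor_pos m c d).le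
  · have hmin : |min (deriv m x) 0| ≤ K :=
      abs_le.2 ⟨le_min (neg_le_of_abs_le (hK x hx)) (neg_nonpos.2 hK0),
        (min_le_right _ _).trans hK0⟩
    exact div_le_div₀ hK0 hmin (monotoneFactor_pos m c d)
      (monotoneOn_monotoneFactor hm_pos hm hc hd hx hdx)

lemma abs_deriv_le_of_lipschitzOnWith_Icc {K : NNReal} (hK : LipschitzOnWith K m (Icc a b))
    {x : ℝ} (hx : x ∈ Ioo a b) : |deriv m x| ≤ K := by
  simpa using norm_deriv_le_of_lipschitzOn (Icc_mem_nhds hx.1 hx.2) hK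

lemma exists_lipschitzWith_eqOn_monotoneFactor (hm_pos : ∀ s ∈ Ioo a b, 0 < m s)
    (hm : ContDiffOn ℝ 1 m (Ioo a b)) (hc : c ∈ Ioo a b) {K : NNReal}
    (hK : LipschitzOnWith K m (Icc a b)) (ha : m a = 0) {d : ℝ} (hd : d ∈ Ioo a b)
    (hdecr : ∀ x ∈ Ioo d b, deriv m x ≤ 0) :
    ∃ g : ℝ → ℝ, (∃ K', LipschitzWith K' g) ∧ EqOn (monotoneFactor m c) g (Ioo a b) ∧
      g a = 0 := by
  have hab : a < b := hd.1.trans hd.2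
  have hlim : Tendsto m (𝓝[Ioo a b] a) (𝓝 0) :=
    ha ▸ (hK.continuousOn a (left_mem_Icc.2 hab.le)).mono Ioo_subset_Icc_self
  obtain ⟨g, hg, hfg, hga⟩ := (lipschitzOnWith_monotoneFactor hm_pos hm hc
    (fun x => abs_deriv_le_of_lipschitzOnWith_Icc hK) hd hdecr).exists_lipschitzWith_eqOn_of_tendsto
    (by rw [closure_Ioo hab.ne]; exact left_mem_Icc.2 hab.le)
    (tendsto_monotoneFactor_nhdsWithin_Ioo_left hm_pos hm hc hlim)
  exact ⟨g, ⟨_, hg⟩, hfg, hga⟩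

lemma exists_lipschitzWith_eqOn_antitoneFactor (hm_pos : ∀ s ∈ Ioo a b, 0 < m s)
    (hm : ContDiffOn ℝ 1 m (Ioo a b)) (hc : c ∈ Ioo a b) {K : NNReal}
    (hK : LipschitzOnWith K m (Icc a b)) (hb : m b = 0) {d : ℝ} (hd : d ∈ Ioo a b)
    (hincr : ∀ x ∈ Ioo a d, 0 ≤ deriv m x) :
    ∃ g : ℝ → ℝ, (∃ K', LipschitzWith K' g) ∧ EqOn (antitoneFactor m c) g (Ioo a b) ∧
      g b = 0 := by
  have hab : a < b := hd.1.trans hd.2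
  have hlim : Tendsto m (𝓝[Ioo a b] b) (𝓝 0) :=
    hb ▸ (hK.continuousOn b (right_mem_Icc.2 hab.le)).mono Ioo_subset_Icc_self
  obtain ⟨g, hg, hfg, hgb⟩ := (lipschitzOnWith_antitoneFactor hm_pos hm hc
    (fun x => abs_deriv_le_of_lipschitzOnWith_Icc hK) hd hincr).exists_lipschitzWith_eqOn_of_tendsto
    (by rw [closure_Ioo hab.ne]; exact right_mem_Icc.2 hab.le)
    (tendsto_antitoneFactor_nhdsWithin_Ioo_right hm_pos hm hc hlim)
  exact ⟨g, ⟨_, hg⟩, hfg, hgb⟩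

end

theorem mobility_decomposition_general
    (α : ℝ) (hα : 0 < α) (m : ℝ → ℝ)
    (hm0 : m 0 = 0) (hmα : m α = 0)
    (hm_pos : ∀ s ∈ Ioo 0 α, 0 < m s)
    (hm_C1 : ContDiffOn ℝ 1 m (Ioo 0 α)) :
    (∃ m1 m2 : ℝ → ℝ,
      ContDiffOn ℝ 1 m1 (Ioo 0 α) ∧ ContDiffOn ℝ 1 m2 (Ioo 0 α) ∧
      (∀ s ∈ Ioo 0 α, 0 < m1 s) ∧ (∀ s ∈ Ioo 0 α, 0 < m2 s) ∧
      MonotoneOn m1 (Ioo 0 α) ∧ AntitoneOn m2 (Ioo 0 α) ∧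
      (∀ s ∈ Ioo 0 α, m s = m1 s * m2 s)) ∧
    ((∃ K : NNReal, LipschitzOnWith K m (Icc 0 α)) →
      (∃ δ ∈ Ioo 0 (α / 2),
        (∀ s ∈ Ioo 0 δ, 0 ≤ deriv m s) ∧ (∀ s ∈ Ioo (α - δ) α, deriv m s ≤ 0)) →
      ∃ m1 m2 : ℝ → ℝ,
        ContDiffOn ℝ 1 m1 (Ioo 0 α) ∧ ContDiffOn ℝ 1 m2 (Ioo 0 α) ∧
        (∀ s ∈ Ioo 0 α, 0 < m1 s) ∧ (∀ s ∈ Ioo 0 α, 0 < m2 s) ∧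
        MonotoneOn m1 (Ioo 0 α) ∧ AntitoneOn m2 (Ioo 0 α) ∧
        (∃ K1 : NNReal, LipschitzOnWith K1 m1 (Icc 0 α)) ∧
        (∃ K2 : NNReal, LipschitzOnWith K2 m2 (Icc 0 α)) ∧
        m1 0 = 0 ∧ m2 α = 0 ∧
        (∀ s ∈ Icc 0 α, m s = m1 s * m2 s)) := by
  have hc : α / 2 ∈ Ioo 0 α := ⟨by linarith, by linarith⟩
  have hC1 := contDiffOn_monotoneFactor hm_pos hm_C1 hc
  have hC2 := contDiffOn_antitoneFactor hm_pos hm_C1 hc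
  have hmono := monotoneOn_monotoneFactor hm_pos hm_C1 hc
  have hanti := antitoneOn_antitoneFactor hm_pos hm_C1 hc
  have hfac s : m s = monotoneFactor m (α / 2) s * antitoneFactor m (α / 2) s :=
    (monotoneFactor_mul_antitoneFactor m _ s).symm
  refine ⟨⟨_, _, hC1, hC2, fun s _ => monotoneFactor_pos m _ s,
    fun s hs => antitoneFactor_pos (hm_pos s hs), hmono, hanti, fun s _ => hfac s⟩, ?_⟩
  rintro ⟨K, hK⟩ ⟨δ, ⟨hδ0, hδα⟩, hincr, hdecr⟩
  obtain ⟨g1, ⟨K1, hg1⟩, hfg1, hg1_0⟩ :=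
    exists_lipschitzWith_eqOn_monotoneFactor hm_pos hm_C1 hc hK hm0
      (d := α - δ) ⟨by linarith, by linarith⟩ hdecr
  obtain ⟨g2, ⟨K2, hg2⟩, hfg2, hg2_α⟩ :=
    exists_lipschitzWith_eqOn_antitoneFactor hm_pos hm_C1 hc hK hmα
      (d := δ) ⟨hδ0, by linarith⟩ hincr
  refine ⟨g1, g2, hC1.congr fun s hs => (hfg1 hs).symm, hC2.congr fun s hs => (hfg2 hs).symm,
    fun s hs => hfg1 hs ▸ monotoneFactor_pos m _ s,
    fun s hs => hfg2 hs ▸ antitoneFactor_pos (hm_pos s hs), hmono.congr hfg1, hanti.congr hfg2,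
    ⟨K1, hg1.lipschitzOnWith⟩, ⟨K2, hg2.lipschitzOnWith⟩, hg1_0, hg2_α, fun s hs => ?_⟩
  rcases hs.1.eq_or_lt with rfl | hs0
  · rw [hm0, hg1_0, zero_mul]
  rcases hs.2.eq_or_lt with rfl | hsα
  · rw [hmα, hg2_α, mul_zero]
  rw [hfac s, hfg1 ⟨hs0, hsα⟩, hfg2 ⟨hs0, hsα⟩]

/-- Decomposition of a saturation-type mobility into the product of a nondecreasing
and a nonincreasing factor. -/
theorem mobility_decomposition
    (α : ℝ) (hα : 0 < α) (m : ℝ → ℝ)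
    (hm_cont : ContinuousOn m (Icc 0 α))
    (hm0 : m 0 = 0) (hmα : m α = 0)
    (hm_pos : ∀ s ∈ Ioo 0 α, 0 < m s)
    (hm_C1 : ContDiffOn ℝ 1 m (Ioo 0 α)) :
    (∃ m1 m2 : ℝ → ℝ,
      ContDiffOn ℝ 1 m1 (Ioo 0 α) ∧ ContDiffOn ℝ 1 m2 (Ioo 0 α) ∧
      (∀ s ∈ Ioo 0 α, 0 < m1 s) ∧ (∀ s ∈ Ioo 0 α, 0 < m2 s) ∧
      MonotoneOn m1 (Ioo 0 α) ∧ AntitoneOn m2 (Ioo 0 α) ∧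
      (∀ s ∈ Ioo 0 α, m s = m1 s * m2 s)) ∧
    ((∃ K : NNReal, LipschitzOnWith K m (Icc 0 α)) →
      (∃ δ ∈ Ioo 0 (α / 2),
        (∀ s ∈ Ioo 0 δ, 0 ≤ deriv m s) ∧ (∀ s ∈ Ioo (α - δ) α, deriv m s ≤ 0)) →
      ∃ m1 m2 : ℝ → ℝ,
        ContDiffOn ℝ 1 m1 (Ioo 0 α) ∧ ContDiffOn ℝ 1 m2 (Ioo 0 α) ∧
        (∀ s ∈ Ioo 0 α, 0 < m1 s) ∧ (∀ s ∈ Ioo 0 α, 0 < m2 s) ∧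
        MonotoneOn m1 (Ioo 0 α) ∧ AntitoneOn m2 (Ioo 0 α) ∧
        (∃ K1 : NNReal, LipschitzOnWith K1 m1 (Icc 0 α)) ∧
        (∃ K2 : NNReal, LipschitzOnWith K2 m2 (Icc 0 α)) ∧
        m1 0 = 0 ∧ m2 α = 0 ∧
        (∀ s ∈ Icc 0 α, m s = m1 s * m2 s)) :=
  mobility_decomposition_general α hα m hm0 hmα hm_pos hm_C1
end

section
/- Let α > 0, s₀ ∈ (0,α), and let Φ : [0,α] → ℝ be continuous, nondecreasing, differentiable on (0,α), with Φ(s₀) = 0. Let κ : (0,1] → (0,∞) be bounded, and for each ε ∈ (0,1] let Φ_ε : [0,α] → ℝ be continuous, differentiable on (0,α), with Φ_ε(s₀) = 0 and min(Φ′(s), 1/κ(ε)) + ε ≤ Φ_ε′(s) ≤ (1+ε)·(min(Φ′(s), 1/κ(ε)) + ε) for all s ∈ (0,α). Assume there exists K ≥ 0 such that for all s ∈ (0,α): (Φ(α) − Φ(s))·|Φ(s)| ≤ K·Φ′(s) and (Φ(s) − Φ(0))·|Φ(s)| ≤ K·Φ′(s). Then there exists K′ ≥ 0 such that for all ε ∈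 (0,1] and all s ∈ (0,α): (Φ_ε(α) − Φ_ε(s))·|Φ_ε(s)| ≤ K′·Φ_ε′(s) and (Φ_ε(s) − Φ_ε(0))·|Φ_ε(s)| ≤ K′·Φ_ε′(s). -/
/-!
Since `Φε′ ≤ (1 + ε) (min (Φ′, 1/κ) + ε) ≤ 2 (Φ′ + ε)`, increments of `Φε` are at most twice those
of `Φ` plus `2αε`; as both fluxes vanish at `s₀`, also `|Φε| ≤ 2 |Φ| + 2αε`. So each left-hand side
for `Φε` is at most four times the corresponding product `P` for `Φ`, plus `O(ε)`. With
`C = Φ(α) - Φ(0)` and `κ ≤ B`, the bounds `P ≤ K Φ′` and `P ≤ C²` combine to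
`P ≤ max (K, C² B) · min (Φ′, 1/κ(ε))`, and the lower bound `Φε′ ≥ min (Φ′, 1/κ(ε)) + ε` absorbs
both terms.
-/

open Set Filter Topology

lemma HasDerivAt.nonneg_of_monotoneOn_of_mem_nhds {f : ℝ → ℝ} {S : Set ℝ} {x d : ℝ}
    (hd : HasDerivAt f d x) (hf : MonotoneOn f S) (hS : S ∈ 𝓝 x) : 0 ≤ d :=
  hd.hasDerivWithinAt.nonneg_of_monotoneOn
    (by simpa using (PerfectSpace.univ_preperfect x (mem_univ x)).nhds_inter hS) hf

lemma monotoneOn_Icc_of_hasDerivAt_nonneg {f f' : ℝ → ℝ} {a b : ℝ}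
    (hf : ContinuousOn f (Icc a b)) (hd : ∀ x ∈ Ioo a b, HasDerivAt f (f' x) x)
    (hf' : ∀ x ∈ Ioo a b, 0 ≤ f' x) : MonotoneOn f (Icc a b) :=
  monotoneOn_of_hasDerivWithinAt_nonneg (convex_Icc a b) hf
    (by simpa only [interior_Icc] using fun x hx => (hd x hx).hasDerivWithinAt)
    (by simpa only [interior_Icc] using hf')

lemma sub_le_sub_of_hasDerivAt_le {f g f' g' : ℝ → ℝ} {a b x y : ℝ}
    (hf : ContinuousOn f (Icc a b)) (hg : ContinuousOn g (Icc a b))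
    (hfd : ∀ t ∈ Ioo a b, HasDerivAt f (f' t) t) (hgd : ∀ t ∈ Ioo a b, HasDerivAt g (g' t) t)
    (hle : ∀ t ∈ Ioo a b, f' t ≤ g' t) (hx : x ∈ Icc a b) (hy : y ∈ Icc a b) (hxy : x ≤ y) :
    f y - f x ≤ g y - g x := by
  have hmono : MonotoneOn (g - f) (Icc a b) :=
    monotoneOn_Icc_of_hasDerivAt_nonneg (hg.sub hf) (fun t ht => (hgd t ht).sub (hfd t ht))
      (fun t ht => sub_nonneg.2 (hle t ht))
  have := hmono hx hy hxy
  simp only [Pi.sub_apply] at this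
  linarith

lemma abs_le_mul_abs_add_of_sub_le {f g : ℝ → ℝ} {S : Set ℝ} {s₀ s c δ : ℝ}
    (hf : MonotoneOn f S) (hg : MonotoneOn g S) (hfs₀ : f s₀ = 0) (hgs₀ : g s₀ = 0)
    (hcomp : ∀ a ∈ S, ∀ b ∈ S, a ≤ b → g b - g a ≤ c * (f b - f a) + δ)
    (hs₀ : s₀ ∈ S) (hs : s ∈ S) : |g s| ≤ c * |f s| + δ := by
  rcases le_total s s₀ with h | h
  · have := hcomp s hs s₀ hs₀ h
    rw [hfs₀, hgs₀] at this
    rw [abs_of_nonpos (hgs₀ ▸ hg hs hs₀ h), abs_of_nonpos (hfs₀ ▸ hf hs hs₀ h)]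
    linarith
  · have := hcomp s₀ hs₀ s hs h
    rw [hfs₀, hgs₀] at this
    rw [abs_of_nonneg (hgs₀ ▸ hg hs₀ hs h), abs_of_nonneg (hfs₀ ▸ hf hs₀ hs h)]
    linarith

lemma abs_le_sub_of_monotoneOn {f : ℝ → ℝ} {a b s₀ s : ℝ} (hf : MonotoneOn f (Icc a b))
    (hs₀ : s₀ ∈ Icc a b) (hfs₀ : f s₀ = 0) (hs : s ∈ Icc a b) : |f s| ≤ f b - f a := by
  have ha : a ∈ Icc a b := left_mem_Icc.2 (hs.1.trans hs.2)
  have hb : b ∈ Icc a b := right_mem_Icc.2 (hs.1.trans hs.2)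
  have := hf ha hs₀ hs₀.1
  have := hf hs₀ hb hs₀.2
  have := hf ha hs hs.1
  have := hf hs hb hs.2
  rw [abs_le]
  constructor <;> linarith

lemma mul_le_four_mul_add {X Y x y C a ε : ℝ} (hY : 0 ≤ Y)
    (hX : X ≤ 2 * x + 2 * a * ε) (hYy : Y ≤ 2 * y + 2 * a * ε)
    (hx : x ∈ Icc 0 C) (hy : y ∈ Icc 0 C) (ha : 0 ≤ a) (hε : ε ∈ Icc 0 1) :
    X * Y ≤ 4 * (x * y) + (8 * a * C + 4 * a ^ 2) * ε := by
  obtain ⟨hx0, hxC⟩ := hx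
  obtain ⟨hy0, hyC⟩ := hy
  obtain ⟨hε0, hε1⟩ := hε
  have haε : 0 ≤ a * ε := mul_nonneg ha hε0
  calc X * Y ≤ (2 * x + 2 * a * ε) * (2 * y + 2 * a * ε) :=
        mul_le_mul hX hYy hY (by positivity)
    _ = 4 * (x * y) + 4 * a * ε * (x + y) + 4 * a ^ 2 * ε * ε := by ring
    _ ≤ 4 * (x * y) + 4 * a * ε * (2 * C) + 4 * a ^ 2 * ε * 1 := by gcongr; linarith
    _ = 4 * (x * y) + (8 * a * C + 4 * a ^ 2) * ε := by ring

lemma le_max_mul_min {z K L t B : ℝ} (hB : 0 < B) (ht : 0 ≤ t)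
    (hzK : z ≤ K * t) (hzL : z ≤ L) : z ≤ max K (L * B) * min t B⁻¹ := by
  rcases le_total t B⁻¹ with h | h
  · rw [min_eq_left h]
    exact hzK.trans (mul_le_mul_of_nonneg_right (le_max_left _ _) ht)
  · rw [min_eq_right h]
    calc z ≤ L * B * B⁻¹ := by rwa [mul_inv_cancel_right₀ hB.ne']
      _ ≤ max K (L * B) * B⁻¹ := by gcongr; exact le_max_right _ _

lemma mul_le_of_le_two_mul_add {X Y x y C a ε K B c d d' : ℝ} (hY : 0 ≤ Y)
    (hX : X ≤ 2 * x + 2 * a * ε) (hYy : Y ≤ 2 * y + 2 * a * ε)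
    (hx : x ∈ Icc 0 C) (hy : y ∈ Icc 0 C) (ha : 0 ≤ a) (hε : ε ∈ Icc 0 1)
    (hB : 0 < B) (hc : B⁻¹ ≤ c) (hd : 0 ≤ d) (hxy : x * y ≤ K * d) (hd' : min d c + ε ≤ d') :
    X * Y ≤ (4 * max K (C ^ 2 * B) + 8 * a * C + 4 * a ^ 2) * d' := by
  have hxyC : x * y ≤ C ^ 2 := by rw [sq]; exact mul_le_mul hx.2 hy.2 hy.1 (hx.1.trans hx.2)
  have hmax : 0 ≤ max K (C ^ 2 * B) := le_max_of_le_right (by positivity)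
  have hxy' : x * y ≤ max K (C ^ 2 * B) * min d c :=
    (le_max_mul_min hB hd hxy hxyC).trans (mul_le_mul_of_nonneg_left (min_le_min_left d hc) hmax)
  have hmin : 0 ≤ min d c := le_min hd ((inv_pos.2 hB).le.trans hc)
  have hC : 0 ≤ C := hx.1.trans hx.2
  calc X * Y ≤ 4 * (x * y) + (8 * a * C + 4 * a ^ 2) * ε :=
        mul_le_four_mul_add hY hX hYy hx hy ha hε
    _ ≤ 4 * (max K (C ^ 2 * B) * min d c) + (8 * a * C + 4 * a ^ 2) * ε := by gcongr
    _ ≤ (4 * max K (C ^ 2 * B) + 8 * a * C + 4 * a ^ 2) * (min d c + ε) := by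
      nlinarith [mul_nonneg hmax hε.1, mul_nonneg (by positivity : 0 ≤ 8 * a * C + 4 * a ^ 2) hmin]
    _ ≤ (4 * max K (C ^ 2 * B) + 8 * a * C + 4 * a ^ 2) * d' := by gcongr

lemma regularised_sub_le {α ε a b : ℝ} {Φ Φ' φ φ' : ℝ → ℝ}
    (hΦ_cont : ContinuousOn Φ (Icc 0 α)) (hΦ_deriv : ∀ s ∈ Ioo 0 α, HasDerivAt Φ (Φ' s) s)
    (hφ_cont : ContinuousOn φ (Icc 0 α)) (hφ_deriv : ∀ s ∈ Ioo 0 α, HasDerivAt φ (φ' s) s)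
    (hφ' : ∀ s ∈ Ioo 0 α, φ' s ≤ 2 * (Φ' s + ε)) (hε : 0 ≤ ε)
    (ha : a ∈ Icc 0 α) (hb : b ∈ Icc 0 α) (hab : a ≤ b) :
    φ b - φ a ≤ 2 * (Φ b - Φ a) + 2 * α * ε := by
  have h := sub_le_sub_of_hasDerivAt_le (g := fun t => 2 * Φ t + 2 * ε * t)
    (g' := fun t => 2 * Φ' t + 2 * ε) hφ_cont (by fun_prop) hφ_deriv
    (fun t ht => ((hΦ_deriv t ht).const_mul 2).add
      (by simpa using (hasDerivAt_id t).const_mul (2 * ε)))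
    (fun t ht => by linarith [hφ' t ht]) ha hb hab
  nlinarith [mul_le_mul_of_nonneg_left (by linarith [ha.1, hb.2] : b - a ≤ α) hε]

theorem technical_condition_of_regularised {α s₀ ε c B K s : ℝ} {Φ Φ' φ φ' : ℝ → ℝ}
    (hs₀ : s₀ ∈ Icc 0 α) (hΦ_cont : ContinuousOn Φ (Icc 0 α)) (hΦ_mono : MonotoneOn Φ (Icc 0 α))
    (hΦ_deriv : ∀ s ∈ Ioo 0 α, HasDerivAt Φ (Φ' s) s) (hΦs₀ : Φ s₀ = 0)
    (hφ_cont : ContinuousOn φ (Icc 0 α)) (hφ_deriv : ∀ s ∈ Ioo 0 α, HasDerivAt φ (φ' s) s)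
    (hφs₀ : φ s₀ = 0) (hε : ε ∈ Ioc 0 1) (hB : 0 < B) (hc : B⁻¹ ≤ c)
    (hφ' : ∀ s ∈ Ioo 0 α, min (Φ' s) c + ε ≤ φ' s ∧ φ' s ≤ (1 + ε) * (min (Φ' s) c + ε))
    (hΦ_cond : ∀ s ∈ Ioo 0 α,
      (Φ α - Φ s) * |Φ s| ≤ K * Φ' s ∧ (Φ s - Φ 0) * |Φ s| ≤ K * Φ' s)
    (hs : s ∈ Ioo 0 α) :
    let K' := 4 * max K ((Φ α - Φ 0) ^ 2 * B) + 8 * α * (Φ α - Φ 0) + 4 * α ^ 2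
    (φ α - φ s) * |φ s| ≤ K' * φ' s ∧ (φ s - φ 0) * |φ s| ≤ K' * φ' s := by
  have hα : 0 ≤ α := hs₀.1.trans hs₀.2
  have h0 : (0 : ℝ) ∈ Icc 0 α := left_mem_Icc.2 hα
  have hαI : α ∈ Icc 0 α := right_mem_Icc.2 hα
  have hsI : s ∈ Icc 0 α := Ioo_subset_Icc_self hs
  have hΦ' : ∀ t ∈ Ioo 0 α, 0 ≤ Φ' t := fun t ht =>
    (hΦ_deriv t ht).nonneg_of_monotoneOn_of_mem_nhds hΦ_mono (Icc_mem_nhds ht.1 ht.2)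
  have hmin : ∀ t ∈ Ioo 0 α, 0 ≤ min (Φ' t) c := fun t ht =>
    le_min (hΦ' t ht) ((inv_pos.2 hB).le.trans hc)
  have hφ_mono : MonotoneOn φ (Icc 0 α) := monotoneOn_Icc_of_hasDerivAt_nonneg hφ_cont hφ_deriv
    fun t ht => by linarith [(hφ' t ht).1, hmin t ht, hε.1]
  have hφ'_le : ∀ t ∈ Ioo 0 α, φ' t ≤ 2 * (Φ' t + ε) := fun t ht => by
    nlinarith [(hφ' t ht).2, min_le_left (Φ' t) c, hmin t ht, hε.1, hε.2]
  have hcomp : ∀ a ∈ Icc 0 α, ∀ b ∈ Icc 0 α, a ≤ b → φ b - φ a ≤ 2 * (Φ b - Φ a) + 2 * α * ε :=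
    fun a ha b hb hab =>
      regularised_sub_le hΦ_cont hΦ_deriv hφ_cont hφ_deriv hφ'_le hε.1.le ha hb hab
  have habs : |φ s| ≤ 2 * |Φ s| + 2 * α * ε :=
    abs_le_mul_abs_add_of_sub_le hΦ_mono hφ_mono hΦs₀ hφs₀ hcomp hs₀ hsI
  have hΦabs : |Φ s| ≤ Φ α - Φ 0 := abs_le_sub_of_monotoneOn hΦ_mono hs₀ hΦs₀ hsI
  have hΦ0s := hΦ_mono h0 hsI hs.1.le
  have hΦsα := hΦ_mono hsI hαI hs.2.le
  obtain ⟨hc₁, hc₂⟩ := hΦ_cond s hs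
  constructor
  · exact mul_le_of_le_two_mul_add (abs_nonneg _) (hcomp s hsI α hαI hs.2.le) habs
      ⟨by linarith, by linarith⟩ ⟨abs_nonneg _, hΦabs⟩ hα (Ioc_subset_Icc_self hε) hB hc
      (hΦ' s hs) hc₁ (hφ' s hs).1
  · exact mul_le_of_le_two_mul_add (abs_nonneg _) (hcomp 0 h0 s hsI hs.1.le) habs
      ⟨by linarith, by linarith⟩ ⟨abs_nonneg _, hΦabs⟩ hα (Ioc_subset_Icc_self hε) hB hc
      (hΦ' s hs) hc₂ (hφ' s hs).1

theorem regularised_technical_condition_uniform_general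
    (α s₀ : ℝ) (hα : 0 < α) (hs₀ : s₀ ∈ Ioo 0 α)
    (Φ Φ' : ℝ → ℝ)
    (hΦ_cont : ContinuousOn Φ (Icc 0 α))
    (hΦ_mono : MonotoneOn Φ (Icc 0 α))
    (hΦ_deriv : ∀ s ∈ Ioo 0 α, HasDerivAt Φ (Φ' s) s)
    (hΦs₀ : Φ s₀ = 0)
    (κ : ℝ → ℝ) (hκ_pos : ∀ ε ∈ Ioc (0:ℝ) 1, 0 < κ ε)
    (hκ_bdd : ∃ B : ℝ, ∀ ε ∈ Ioc (0:ℝ) 1, κ ε ≤ B)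
    (Φε Φε' : ℝ → ℝ → ℝ)
    (hΦε_cont : ∀ ε ∈ Ioc (0:ℝ) 1, ContinuousOn (Φε ε) (Icc 0 α))
    (hΦε_deriv : ∀ ε ∈ Ioc (0:ℝ) 1, ∀ s ∈ Ioo 0 α, HasDerivAt (Φε ε) (Φε' ε s) s)
    (hΦεs₀ : ∀ ε ∈ Ioc (0:ℝ) 1, Φε ε s₀ = 0)
    (hΦε_bounds : ∀ ε ∈ Ioc (0:ℝ) 1, ∀ s ∈ Ioo 0 α,
      min (Φ' s) (1 / κ ε) + ε ≤ Φε' ε s ∧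
      Φε' ε s ≤ (1 + ε) * (min (Φ' s) (1 / κ ε) + ε))
    (K : ℝ)
    (hΦ_cond : ∀ s ∈ Ioo 0 α,
      (Φ α - Φ s) * |Φ s| ≤ K * Φ' s ∧ (Φ s - Φ 0) * |Φ s| ≤ K * Φ' s) :
    ∃ K' : ℝ, 0 ≤ K' ∧ ∀ ε ∈ Ioc (0:ℝ) 1, ∀ s ∈ Ioo 0 α,
      (Φε ε α - Φε ε s) * |Φε ε s| ≤ K' * Φε' ε s ∧
      (Φε ε s - Φε ε 0) * |Φε ε s| ≤ K' * Φε' ε s := by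
  obtain ⟨B, hB⟩ := hκ_bdd
  have h1 : (1 : ℝ) ∈ Ioc 0 1 := ⟨one_pos, le_rfl⟩
  have hB0 : 0 < B := (hκ_pos 1 h1).trans_le (hB 1 h1)
  have hC : 0 ≤ Φ α - Φ 0 :=
    sub_nonneg.2 (hΦ_mono (left_mem_Icc.2 hα.le) (right_mem_Icc.2 hα.le) hα.le)
  have hmax : 0 ≤ max K ((Φ α - Φ 0) ^ 2 * B) := le_max_of_le_right (by positivity)
  refine ⟨4 * max K ((Φ α - Φ 0) ^ 2 * B) + 8 * α * (Φ α - Φ 0) + 4 * α ^ 2,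
    by positivity, fun ε hε s hs => ?_⟩
  have hc : B⁻¹ ≤ 1 / κ ε := by rw [one_div]; exact inv_anti₀ (hκ_pos ε hε) (hB ε hε)
  exact technical_condition_of_regularised (Ioo_subset_Icc_self hs₀) hΦ_cont hΦ_mono
    hΦ_deriv hΦs₀ (hΦε_cont ε hε) (hΦε_deriv ε hε) (hΦεs₀ ε hε) hε hB0 hc (hΦε_bounds ε hε)
    hΦ_cond hs

/-- The technical regularity condition (H₅) holds uniformly in ε for the regularised
family of diffusion fluxes Φ_ε. -/
theorem regularised_technical_condition_uniform
    (α s₀ : ℝ) (hα : 0 < α) (hs₀ : s₀ ∈ Ioo 0 α)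
    (Φ Φ' : ℝ → ℝ)
    (hΦ_cont : ContinuousOn Φ (Icc 0 α))
    (hΦ_mono : MonotoneOn Φ (Icc 0 α))
    (hΦ_deriv : ∀ s ∈ Ioo 0 α, HasDerivAt Φ (Φ' s) s)
    (hΦs₀ : Φ s₀ = 0)
    (κ : ℝ → ℝ) (hκ_pos : ∀ ε ∈ Ioc (0:ℝ) 1, 0 < κ ε)
    (hκ_bdd : ∃ B : ℝ, ∀ ε ∈ Ioc (0:ℝ) 1, κ ε ≤ B)
    (Φε Φε' : ℝ → ℝ → ℝ)
    (hΦε_cont : ∀ ε ∈ Ioc (0:ℝ) 1, ContinuousOn (Φε ε) (Icc 0 α))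
    (hΦε_deriv : ∀ ε ∈ Ioc (0:ℝ) 1, ∀ s ∈ Ioo 0 α, HasDerivAt (Φε ε) (Φε' ε s) s)
    (hΦεs₀ : ∀ ε ∈ Ioc (0:ℝ) 1, Φε ε s₀ = 0)
    (hΦε_bounds : ∀ ε ∈ Ioc (0:ℝ) 1, ∀ s ∈ Ioo 0 α,
      min (Φ' s) (1 / κ ε) + ε ≤ Φε' ε s ∧
      Φε' ε s ≤ (1 + ε) * (min (Φ' s) (1 / κ ε) + ε))
    (K : ℝ) (hK : 0 ≤ K)
    (hΦ_cond : ∀ s ∈ Ioo 0 α,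
      (Φ α - Φ s) * |Φ s| ≤ K * Φ' s ∧ (Φ s - Φ 0) * |Φ s| ≤ K * Φ' s) :
    ∃ K' : ℝ, 0 ≤ K' ∧ ∀ ε ∈ Ioc (0:ℝ) 1, ∀ s ∈ Ioo 0 α,
      (Φε ε α - Φε ε s) * |Φε ε s| ≤ K' * Φε' ε s ∧
      (Φε ε s - Φε ε 0) * |Φε ε s| ≤ K' * Φε' ε s :=
  regularised_technical_condition_uniform_general α s₀ hα hs₀ Φ Φ' hΦ_cont hΦ_mono hΦ_deriv hΦs₀ κ
    hκ_pos hκ_bdd Φε Φε' hΦε_cont hΦε_deriv hΦεs₀ hΦε_bounds K hΦ_cond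
end

section
/- Let M ∈ (0, α|Ω|) and let ρ̂ be an L¹-local minimiser of ℱ on 𝒜_M. Then there exists a constant C ∈ ℝ such that for a.e. x ∈ Ω: (i) if 0 < ρ̂(x) < α then U′(ρ̂(x)) + V(x) = C; (ii) if ρ̂(x) = 0 then C − V(x) ≤ ζ̲; (iii) if ρ̂(x) = α then C − V(x) ≥ ζ̄, where the inequalities in (ii) and (iii) are understood in the extended real numbers. -/
open Set MeasureTheory Filter Topology

/-!
Think of the Lagrange multiplier as a price for mass. If on one set of positive measure raising `ρ̂` changes the
energy density `U(ρ̂) + Vρ̂` by less than `p` per unit of mass, while on another lowering it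
saves more than `q > p` per unit, then moving a little mass uniformly from the second set to
the first keeps the total mass, stays in the L¹ ball and lowers the energy by a multiple of
`q - p`. Convexity of `U` makes these marginal rates uniform in the size of the step, so this
single comparison suffices. Hence "adding pays at price `p`" and "removing pays at price `q`"
cannot both happen on non-null sets, and the threshold `C` between them (finite because
`0 < M < α|Ω|`) makes `C - V(x)` a subgradient of `U` on `[0, α]` at `ρ̂(x)` for a.e. `x`.
In the interior of `[0, α]` this subgradient is `U'(ρ̂(x))`; at the endpoints it is compared
with the one-sided limits of `U'` through the slopes of `U`.
-/

def IsSubgradientOn (U : ℝ → ℝ) (S : Set ℝ) (s c : ℝ) : Prop :=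
  ∀ y ∈ S, U s + c * (y - s) ≤ U y

namespace IsSubgradientOn

variable {U U' : ℝ → ℝ} {S : Set ℝ} {a b s c u : ℝ} {ζ : EReal}

theorem eq_of_hasDerivAt (h : IsSubgradientOn U S s c) (hS : S ∈ 𝓝 s)
    (hU : HasDerivAt U u s) : u = c := by
  have hmin : IsMinOn (fun y => U y - c * y) S s :=
    isMinOn_iff.2 fun y hy => by linarith [h y hy]
  have := (hmin.isLocalMin hS).hasDerivAt_eq_zero (hU.sub ((hasDerivAt_id s).const_mul c))
  linarith

theorem le_slope (h : IsSubgradientOn U S s c) {y : ℝ} (hy : y ∈ S) (hsy : s < y) :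
    c ≤ slope U s y := by
  rw [slope_def_field, le_div_iff₀ (sub_pos.2 hsy)]
  linarith [h y hy]

theorem slope_le (h : IsSubgradientOn U S s c) {y : ℝ} (hy : y ∈ S) (hys : y < s) :
    slope U y s ≤ c := by
  rw [slope_def_field, div_le_iff₀ (sub_pos.2 hys)]
  linarith [h y hy]

theorem coe_le_of_tendsto_nhdsGT (h : IsSubgradientOn U (Icc a b) a c) (hab : a < b)
    (hU : ConvexOn ℝ (Icc a b) U) (hU' : ∀ t ∈ Ioo a b, HasDerivAt U (U' t) t)
    (hζ : Tendsto (fun t => (U' t : EReal)) (𝓝[>] a) (𝓝 ζ)) : (c : EReal) ≤ ζ := by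
  refine ge_of_tendsto hζ (eventually_of_mem (Ioo_mem_nhdsGT hab) fun t ht => ?_)
  have ha : a ∈ Icc a b := left_mem_Icc.2 hab.le
  exact EReal.coe_le_coe_iff.2 <| (h.le_slope (Ioo_subset_Icc_self ht) ht.1).trans
    (hU.slope_le_of_hasDerivAt ha (Ioo_subset_Icc_self ht) ht.1 (hU' t ht))

theorem le_coe_of_tendsto_nhdsLT (h : IsSubgradientOn U (Icc a b) b c) (hab : a < b)
    (hU : ConvexOn ℝ (Icc a b) U) (hU' : ∀ t ∈ Ioo a b, HasDerivAt U (U' t) t)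
    (hζ : Tendsto (fun t => (U' t : EReal)) (𝓝[<] b) (𝓝 ζ)) : ζ ≤ (c : EReal) := by
  refine le_of_tendsto hζ (eventually_of_mem (Ioo_mem_nhdsLT hab) fun t ht => ?_)
  have hb : b ∈ Icc a b := right_mem_Icc.2 hab.le
  exact EReal.coe_le_coe_iff.2 <|
    (hU.le_slope_of_hasDerivAt (Ioo_subset_Icc_self ht) hb ht.2 (hU' t ht)).trans
    (h.slope_le (Ioo_subset_Icc_self ht) ht.2)

theorem congr {U₀ : ℝ → ℝ} (h : IsSubgradientOn U S s c) (hs : s ∈ S) (hUU₀ : EqOn U U₀ S) :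
    IsSubgradientOn U₀ S s c := fun y hy => by
  rw [← hUU₀ hs, ← hUU₀ hy]; exact h y hy

end IsSubgradientOn

def IsProfitable (U : ℝ → ℝ) (S : Set ℝ) (w s d : ℝ) : Prop :=
  s + d ∈ S ∧ U (s + d) < U s + w * d

section IsProfitable

variable {U : ℝ → ℝ} {S : Set ℝ} {w w' s d : ℝ}

theorem IsProfitable.mono (h : IsProfitable U S w s d) (hw : w * d ≤ w' * d) :
    IsProfitable U S w' s d :=
  ⟨h.1, h.2.trans_le (by linarith)⟩

theorem ConvexOn.isProfitable_mul (hU : ConvexOn ℝ S U) (hs : s ∈ S) (h : IsProfitable U S w s d)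
    {θ : ℝ} (hθ : θ ∈ Ioc 0 1) : IsProfitable U S w s (θ * d) := by
  have hcomb : (1 - θ) • s + θ • (s + d) = s + θ * d := by simp only [smul_eq_mul]; ring
  refine ⟨hcomb ▸ hU.1 hs h.1 (sub_nonneg.2 hθ.2) hθ.1.le (sub_add_cancel 1 θ), ?_⟩
  have hle := hU.2 hs h.1 (sub_nonneg.2 hθ.2) hθ.1.le (sub_add_cancel 1 θ)
  rw [hcomb, smul_eq_mul, smul_eq_mul] at hle
  nlinarith [mul_lt_mul_of_pos_left h.2 hθ.1]

theorem ConvexOn.lt_of_isProfitable (hU : ConvexOn ℝ S U) {d₁ d₂ : ℝ}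
    (h₁ : IsProfitable U S w s d₁) (hd₁ : 0 < d₁) (h₂ : IsProfitable U S w' s (-d₂))
    (hd₂ : 0 < d₂) : w' < w := by
  have hslope := hU.slope_mono_adjacent h₂.1 h₁.1 (by linarith : s + -d₂ < s)
    (by linarith : s < s + d₁)
  rw [show s - (s + -d₂) = d₂ by ring, show s + d₁ - s = d₁ by ring,
    div_le_div_iff₀ hd₂ hd₁] at hslope
  nlinarith [mul_lt_mul_of_pos_right h₁.2 hd₂, mul_lt_mul_of_pos_right h₂.2 hd₁, mul_pos hd₁ hd₂]

theorem isSubgradientOn_of_forall_not_isProfitable {c : ℝ}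
    (hl : ∀ w < c, ∀ d > 0, ¬ IsProfitable U S w s d)
    (hr : ∀ w > c, ∀ d < 0, ¬ IsProfitable U S w s d) : IsSubgradientOn U S s c := by
  intro y hy
  by_contra! hlt
  have hd : y - s ≠ 0 := fun h => by simp [sub_eq_zero.1 h] at hlt
  -- moving the price slightly against the sign of `y - s` keeps the step to `y` profitable
  set w := c - (U s + c * (y - s) - U y) / (2 * (y - s))
  have hprof : IsProfitable U S w s (y - s) := by
    refine ⟨by simpa using hy, ?_⟩
    have : w * (y - s) = c * (y - s) - (U s + c * (y - s) - U y) / 2 := by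
      simp only [w]; field_simp
    rw [add_sub_cancel, this]
    linarith
  rcases hd.lt_or_gt with hneg | hpos
  · refine hr w ?_ _ hneg hprof
    have : (U s + c * (y - s) - U y) / (2 * (y - s)) < 0 :=
      div_neg_of_pos_of_neg (by linarith) (by linarith)
    linarith
  · refine hl w ?_ _ hpos hprof
    have : 0 < (U s + c * (y - s) - U y) / (2 * (y - s)) := div_pos (by linarith) (by linarith)
    linarith

end IsProfitable

theorem exists_continuous_eqOn_Icc {β : Type*} [TopologicalSpace β] {U : ℝ → β} {a b : ℝ}
    (hab : a ≤ b) (hU : ContinuousOn U (Icc a b)) :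
    ∃ U₀ : ℝ → β, Continuous U₀ ∧ EqOn U U₀ (Icc a b) :=
  ⟨IccExtend hab fun y => U y,
    continuous_IccExtend_iff.2 (hU.comp_continuous continuous_subtype_val Subtype.prop),
    fun _ hx => (IccExtend_of_mem hab (fun y => U y) hx).symm⟩

noncomputable section

variable {X : Type*} [MeasurableSpace X]

def freeEnergy (μ : Measure X) (U : ℝ → ℝ) (V ρ : X → ℝ) : ℝ :=
  ∫ x, (U (ρ x) + V x * ρ x) ∂μ

def IsLocalMinimizer (μ : Measure X) (α : ℝ) (U : ℝ → ℝ) (V ρ : X → ℝ) : Prop :=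
  ∃ r : ℝ, 0 < r ∧ ∀ ρ' : X → ℝ, Integrable ρ' μ → (∀ᵐ x ∂μ, ρ' x ∈ Icc 0 α) →
    ∫ x, ρ' x ∂μ = ∫ x, ρ x ∂μ → ∫ x, |ρ' x - ρ x| ∂μ < r →
    freeEnergy μ U V ρ ≤ freeEnergy μ U V ρ'

-- At the price `p` for mass, changing `ρ x` by a positive multiple of `e` changes the energy
-- density `U (ρ x) + V x * ρ x` by less than `p` per unit of mass.
def profitableSet (α : ℝ) (U : ℝ → ℝ) (V ρ : X → ℝ) (p e : ℝ) : Set X :=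
  {x | ∃ τ > 0, IsProfitable U (Icc 0 α) (p - V x) (ρ x) (τ * e)}

def massTransfer (μ : Measure X) (A B : Set X) (t : ℝ) (ρ : X → ℝ) (x : X) : ℝ :=
  ρ x + A.indicator (fun _ => t / μ.real A) x - B.indicator (fun _ => t / μ.real B) x

variable {μ : Measure X} {α p q t : ℝ} {U : ℝ → ℝ} {V ρ : X → ℝ} {A B : Set X}

theorem exists_measurable_mem_Icc_ae_eq {f : X → ℝ} {a b : ℝ} (hab : a ≤ b)
    (hf : AEMeasurable f μ) (hfab : ∀ᵐ x ∂μ, f x ∈ Icc a b) :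
    ∃ g : X → ℝ, Measurable g ∧ (∀ x, g x ∈ Icc a b) ∧ f =ᵐ[μ] g := by
  refine ⟨fun x => projIcc a b hab (hf.mk f x),
    (continuous_subtype_val.comp continuous_projIcc).measurable.comp hf.measurable_mk,
    fun x => (projIcc a b hab _).2, ?_⟩
  filter_upwards [hf.ae_eq_mk, hfab] with x h₁ h₂
  rw [← h₁, projIcc_of_mem hab h₂]

theorem exists_ae_threshold {A B : ℝ → Set X} (hA : Monotone A) (hB : Antitone B)
    (hAB : ∀ p q, p < q → μ (A p) = 0 ∨ μ (B q) = 0) (hA0 : ∃ p, μ (A p) ≠ 0)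
    (hB0 : ∃ q, μ (B q) ≠ 0) :
    ∃ C, ∀ᵐ x ∂μ, (∀ p < C, x ∉ A p) ∧ ∀ q > C, x ∉ B q := by
  obtain ⟨p₀, hp₀⟩ := hA0
  obtain ⟨q₀, hq₀⟩ := hB0
  set T := {c | μ (B c) = 0}
  have hT : p₀ + 1 ∈ T := (hAB p₀ (p₀ + 1) (by linarith)).resolve_left hp₀
  have hbdd : BddBelow T :=
    ⟨q₀, fun c hc => not_lt.1 fun h => hq₀ (measure_mono_null (hB h.le) hc)⟩
  have hAnull : ∀ p < sInf T, μ (A p) = 0 := fun p hp =>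
    (hAB p ((p + sInf T) / 2) (by linarith)).resolve_right
      (notMem_of_lt_csInf (s := T) (by linarith) hbdd)
  have hBnull : ∀ q > sInf T, μ (B q) = 0 := fun q hq => by
    obtain ⟨c, hc, hcq⟩ := exists_lt_of_csInf_lt ⟨_, hT⟩ hq
    exact measure_mono_null (hB hcq.le) hc
  have hrat : ∀ᵐ x ∂μ, ∀ r : ℚ, ((r : ℝ) < sInf T → x ∉ A r) ∧ (sInf T < r → x ∉ B r) :=
    ae_all_iff.2 fun r =>
      (eventually_imp_distrib_left.2 fun h => measure_eq_zero_iff_ae_notMem.1 (hAnull r h)).and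
        (eventually_imp_distrib_left.2 fun h => measure_eq_zero_iff_ae_notMem.1 (hBnull r h))
  refine ⟨sInf T, hrat.mono fun x hx => ⟨fun p hp hxp => ?_, fun q hq hxq => ?_⟩⟩
  · obtain ⟨r, hpr, hrC⟩ := exists_rat_btwn hp
    exact (hx r).1 hrC (hA hpr.le hxp)
  · obtain ⟨r, hCr, hrq⟩ := exists_rat_btwn hq
    exact (hx r).2 hCr (hB hrq.le hxq)

theorem measure_setOf_pos_ne_zero_of_integral_pos {f : X → ℝ} (h : 0 < ∫ x, f x ∂μ) :
    μ {x | 0 < f x} ≠ 0 := by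
  intro h0
  have := integral_nonpos_of_ae (f := f)
    ((measure_eq_zero_iff_ae_notMem.1 h0).mono fun x hx => not_lt.1 hx)
  linarith

section FiniteMeasure

variable [IsFiniteMeasure μ]

theorem integrable_of_mem_Icc {σ : X → ℝ} (hσ : AEStronglyMeasurable σ μ)
    (hσα : ∀ᵐ x ∂μ, σ x ∈ Icc 0 α) : Integrable σ μ :=
  Integrable.of_bound hσ α <| hσα.mono fun x hx => by rw [Real.norm_of_nonneg hx.1]; exact hx.2

theorem integrable_energy (hUc : Continuous U) (hVi : Integrable V μ) {σ : X → ℝ}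
    (hσ : AEStronglyMeasurable σ μ) (hσα : ∀ᵐ x ∂μ, σ x ∈ Icc 0 α) :
    Integrable (fun x => U (σ x) + V x * σ x) μ := by
  obtain ⟨C, hC⟩ := isCompact_Icc.exists_bound_of_continuousOn (hUc.continuousOn (s := Icc 0 α))
  refine (Integrable.of_bound (hUc.comp_aestronglyMeasurable hσ) C ?_).add
    (hVi.mul_bdd hσ (c := α) ?_)
  · exact hσα.mono fun x hx => hC _ hx
  · exact hσα.mono fun x hx => by rw [Real.norm_of_nonneg hx.1]; exact hx.2

theorem measure_setOf_lt_ne_zero_of_integral_lt {f : X → ℝ} {c : ℝ}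
    (hf : Integrable f μ) (h : ∫ x, f x ∂μ < c * μ.real univ) : μ {x | f x < c} ≠ 0 := by
  intro h0
  have := integral_mono_ae (integrable_const c) hf
    ((measure_eq_zero_iff_ae_notMem.1 h0).mono fun x hx => not_lt.1 hx)
  rw [integral_const, smul_eq_mul, mul_comm] at this
  linarith

end FiniteMeasure

theorem exists_uniform_isProfitable (hUc : Continuous U) (hU : ConvexOn ℝ (Icc 0 α) U)
    (hV : Measurable V) (hρ : Measurable ρ) (hρα : ∀ x, ρ x ∈ Icc 0 α) {e : ℝ}
    (h : μ (profitableSet α U V ρ p e) ≠ 0) :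
    ∃ A, MeasurableSet A ∧ μ A ≠ 0 ∧ ∃ h₀ > 0, ∀ x ∈ A, ∀ τ ∈ Ioc 0 h₀,
      IsProfitable U (Icc 0 α) (p - V x) (ρ x) (τ * e) := by
  set A : ℕ → Set X := fun n => {x | IsProfitable U (Icc 0 α) (p - V x) (ρ x) ((n + 1 : ℝ)⁻¹ * e)}
  -- by convexity a profitable step stays profitable when shortened
  have hcover : profitableSet α U V ρ p e ⊆ ⋃ n, A n := by
    rintro x ⟨τ, hτ, hx⟩
    obtain ⟨n, hn⟩ := exists_nat_one_div_lt hτ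
    have hθ : (n + 1 : ℝ)⁻¹ / τ ∈ Ioc 0 1 :=
      ⟨by positivity, (div_le_one hτ).2 (by simpa using hn.le)⟩
    have := hU.isProfitable_mul (hρα x) hx hθ
    rw [show (n + 1 : ℝ)⁻¹ / τ * (τ * e) = (n + 1 : ℝ)⁻¹ * e by field_simp] at this
    exact mem_iUnion.2 ⟨n, this⟩
  obtain ⟨n, hn⟩ := exists_measure_pos_of_not_measure_iUnion_null fun h0 =>
    h (measure_mono_null hcover h0)
  refine ⟨A n, ?_, hn.ne', (n + 1 : ℝ)⁻¹, by positivity, fun x hx τ hτ => ?_⟩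
  · exact (measurableSet_Icc.preimage (by fun_prop)).inter
      (measurableSet_lt (hUc.measurable.comp (by fun_prop)) (by fun_prop))
  · have hθ : τ * (n + 1) ∈ Ioc 0 1 := by
      refine ⟨by have := hτ.1; positivity, ?_⟩
      have := mul_le_mul_of_nonneg_right hτ.2 (by positivity : (0 : ℝ) ≤ n + 1)
      rwa [inv_mul_cancel₀ (by positivity)] at this
    have := hU.isProfitable_mul (hρα x) hx hθ
    rwa [show τ * (n + 1) * ((n + 1 : ℝ)⁻¹ * e) = τ * e by field_simp] at this

theorem exists_measure_profitableSet_ne_zero {e : ℝ} (he : e ≠ 0)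
    (h : μ {x | ∃ τ > 0, ρ x + τ * e ∈ Icc 0 α} ≠ 0) :
    ∃ p, μ (profitableSet α U V ρ p e) ≠ 0 := by
  have hcover : {x | ∃ τ > 0, ρ x + τ * e ∈ Icc 0 α} ⊆
      ⋃ n : ℕ, profitableSet α U V ρ (n * e) e := by
    rintro x ⟨τ, hτ, hmem⟩
    obtain ⟨n, hn⟩ := exists_nat_gt ((U (ρ x + τ * e) - U (ρ x) + V x * (τ * e)) / (τ * e ^ 2))
    rw [div_lt_iff₀ (by positivity)] at hn
    exact mem_iUnion.2 ⟨n, τ, hτ, hmem, by nlinarith⟩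
  obtain ⟨n, hn⟩ := exists_measure_pos_of_not_measure_iUnion_null fun h0 =>
    h (measure_mono_null hcover h0)
  exact ⟨_, hn.ne'⟩

section MassTransfer

theorem massTransfer_of_mem_left (hAB : Disjoint A B) {x : X} (hx : x ∈ A) :
    massTransfer μ A B t ρ x = ρ x + t / μ.real A := by
  simp [massTransfer, hx, disjoint_left.1 hAB hx]

theorem massTransfer_of_mem_right (hAB : Disjoint A B) {x : X} (hx : x ∈ B) :
    massTransfer μ A B t ρ x = ρ x - t / μ.real B := by
  simp [massTransfer, hx, disjoint_right.1 hAB hx]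

theorem massTransfer_of_notMem {x : X} (hxA : x ∉ A) (hxB : x ∉ B) :
    massTransfer μ A B t ρ x = ρ x := by
  simp [massTransfer, hxA, hxB]

theorem measurable_massTransfer (hρ : Measurable ρ) (hA : MeasurableSet A) (hB : MeasurableSet B) :
    Measurable (massTransfer μ A B t ρ) :=
  (hρ.add (measurable_const.indicator hA)).sub (measurable_const.indicator hB)

theorem massTransfer_mem (hAB : Disjoint A B) {S : Set ℝ} (hρS : ∀ x, ρ x ∈ S)
    (hA : ∀ x ∈ A, ρ x + t / μ.real A ∈ S) (hB : ∀ x ∈ B, ρ x + -(t / μ.real B) ∈ S) (x : X) :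
    massTransfer μ A B t ρ x ∈ S := by
  by_cases hxA : x ∈ A
  · rw [massTransfer_of_mem_left hAB hxA]; exact hA x hxA
  by_cases hxB : x ∈ B
  · rw [massTransfer_of_mem_right hAB hxB, sub_eq_add_neg]; exact hB x hxB
  · rw [massTransfer_of_notMem hxA hxB]; exact hρS x

variable [IsFiniteMeasure μ]

theorem integral_indicator_div_measureReal (hA : MeasurableSet A) (hA0 : μ A ≠ 0) (t : ℝ) :
    ∫ x, A.indicator (fun _ => t / μ.real A) x ∂μ = t := by
  rw [integral_indicator_const _ hA, smul_eq_mul,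
    mul_div_cancel₀ _ ((measureReal_ne_zero_iff (measure_ne_top μ A)).2 hA0)]

theorem integral_massTransfer (hρ : Integrable ρ μ) (hA : MeasurableSet A) (hB : MeasurableSet B)
    (hA0 : μ A ≠ 0) (hB0 : μ B ≠ 0) :
    ∫ x, massTransfer μ A B t ρ x ∂μ = ∫ x, ρ x ∂μ := by
  have hiA := (integrable_const (μ := μ) (t / μ.real A)).indicator hA
  have hiB := (integrable_const (μ := μ) (t / μ.real B)).indicator hB
  simp only [massTransfer]
  rw [integral_sub (f := fun x => ρ x + A.indicator (fun _ => t / μ.real A) x) (hρ.add hiA) hiB,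
    integral_add hρ hiA,
    integral_indicator_div_measureReal hA hA0, integral_indicator_div_measureReal hB hB0,
    add_sub_cancel_right]

theorem integral_abs_massTransfer_sub (hA : MeasurableSet A) (hB : MeasurableSet B)
    (hAB : Disjoint A B) (hA0 : μ A ≠ 0) (hB0 : μ B ≠ 0) (ht : 0 ≤ t) :
    ∫ x, |massTransfer μ A B t ρ x - ρ x| ∂μ = 2 * t := by
  have hA' := abs_of_nonneg (div_nonneg ht (measureReal_nonneg (μ := μ) (s := A)))
  have hB' := abs_of_nonneg (div_nonneg ht (measureReal_nonneg (μ := μ) (s := B)))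
  have hpt : ∀ x, |massTransfer μ A B t ρ x - ρ x| =
      A.indicator (fun _ => t / μ.real A) x + B.indicator (fun _ => t / μ.real B) x := by
    intro x
    by_cases hxA : x ∈ A
    · have hxB := disjoint_left.1 hAB hxA
      simp [massTransfer_of_mem_left hAB hxA, hxA, hxB, hA']
    by_cases hxB : x ∈ B
    · simp [massTransfer_of_mem_right hAB hxB, hxA, hxB, hB']
    · simp [massTransfer_of_notMem hxA hxB, hxA, hxB]
  simp_rw [hpt]
  rw [integral_add ((integrable_const _).indicator hA) ((integrable_const _).indicator hB),
    integral_indicator_div_measureReal hA hA0, integral_indicator_div_measureReal hB hB0]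
  ring

end MassTransfer

section FirstVariation

variable [IsFiniteMeasure μ]

theorem freeEnergy_massTransfer_le (hUc : Continuous U) (hVi : Integrable V μ)
    (hρ : Measurable ρ) (hρα : ∀ x, ρ x ∈ Icc 0 α) (hA : MeasurableSet A) (hB : MeasurableSet B)
    (hAB : Disjoint A B) (hA0 : μ A ≠ 0) (hB0 : μ B ≠ 0)
    (hAp : ∀ x ∈ A, IsProfitable U (Icc 0 α) (p - V x) (ρ x) (t / μ.real A))
    (hBq : ∀ x ∈ B, IsProfitable U (Icc 0 α) (q - V x) (ρ x) (-(t / μ.real B))) :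
    freeEnergy μ U V (massTransfer μ A B t ρ) ≤ freeEnergy μ U V ρ + t * (p - q) := by
  set ρ' := massTransfer μ A B t ρ
  have hρ'α : ∀ x, ρ' x ∈ Icc 0 α :=
    massTransfer_mem hAB hρα (fun x hx => (hAp x hx).1) (fun x hx => (hBq x hx).1)
  have hpt : ∀ x, U (ρ' x) + V x * ρ' x ≤ U (ρ x) + V x * ρ x +
      (A.indicator (fun _ => p * t / μ.real A) x - B.indicator (fun _ => q * t / μ.real B) x) := by
    intro x
    by_cases hxA : x ∈ A
    · have := (hAp x hxA).2
      simp only [ρ', massTransfer_of_mem_left hAB hxA, indicator_of_mem hxA,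
        indicator_of_notMem (disjoint_left.1 hAB hxA), mul_div_assoc]
      linarith
    by_cases hxB : x ∈ B
    · have := (hBq x hxB).2
      simp only [ρ', massTransfer_of_mem_right hAB hxB, indicator_of_mem hxB,
        indicator_of_notMem hxA, mul_div_assoc, ← sub_eq_add_neg] at this ⊢
      linarith
    · simp [ρ', massTransfer_of_notMem hxA hxB, hxA, hxB]
  have hiA := (integrable_const (μ := μ) (p * t / μ.real A)).indicator hA
  have hiB := (integrable_const (μ := μ) (q * t / μ.real B)).indicator hB
  have hiG : Integrable (fun x => A.indicator (fun _ => p * t / μ.real A) x -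
      B.indicator (fun _ => q * t / μ.real B) x) μ := hiA.sub hiB
  have hiρ := integrable_energy hUc hVi hρ.aestronglyMeasurable (ae_of_all μ hρα)
  calc freeEnergy μ U V ρ'
      ≤ ∫ x, (U (ρ x) + V x * ρ x +
          (A.indicator (fun _ => p * t / μ.real A) x -
            B.indicator (fun _ => q * t / μ.real B) x)) ∂μ :=
        integral_mono (integrable_energy hUc hVi
          (measurable_massTransfer hρ hA hB).aestronglyMeasurable (ae_of_all μ hρ'α))
          (hiρ.add hiG) hpt
    _ = freeEnergy μ U V ρ + t * (p - q) := by
        rw [integral_add hiρ hiG, integral_sub hiA hiB,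
          integral_indicator_div_measureReal hA hA0, integral_indicator_div_measureReal hB hB0,
          freeEnergy]
        ring

theorem IsLocalMinimizer.le_of_isProfitable (hmin : IsLocalMinimizer μ α U V ρ)
    (hUc : Continuous U) (hVi : Integrable V μ) (hρ : Measurable ρ) (hρα : ∀ x, ρ x ∈ Icc 0 α)
    (hA : MeasurableSet A) (hB : MeasurableSet B) (hAB : Disjoint A B) (hA0 : μ A ≠ 0)
    (hB0 : μ B ≠ 0) {h₀ : ℝ} (hh₀ : 0 < h₀)
    (hAp : ∀ x ∈ A, ∀ τ ∈ Ioc 0 h₀, IsProfitable U (Icc 0 α) (p - V x) (ρ x) τ)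
    (hBq : ∀ x ∈ B, ∀ τ ∈ Ioc 0 h₀, IsProfitable U (Icc 0 α) (q - V x) (ρ x) (-τ)) :
    q ≤ p := by
  obtain ⟨r, hr, hmin⟩ := hmin
  have hAr : 0 < μ.real A := ENNReal.toReal_pos hA0 (measure_ne_top μ A)
  have hBr : 0 < μ.real B := ENNReal.toReal_pos hB0 (measure_ne_top μ B)
  set t := min (r / 3) (h₀ * min (μ.real A) (μ.real B))
  have ht : 0 < t := lt_min (by linarith) (mul_pos hh₀ (lt_min hAr hBr))
  have htr : t ≤ r / 3 := min_le_left _ _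
  have hstep : ∀ m, 0 < m → min (μ.real A) (μ.real B) ≤ m → t / m ∈ Ioc 0 h₀ := fun m hm hle =>
    ⟨div_pos ht hm, (div_le_iff₀ hm).2 <| (min_le_right _ _).trans (by nlinarith)⟩
  have hAp' := fun x hx => hAp x hx _ (hstep _ hAr (min_le_left _ _))
  have hBq' := fun x hx => hBq x hx _ (hstep _ hBr (min_le_right _ _))
  have hρ'α := massTransfer_mem (t := t) (μ := μ) hAB hρα (fun x hx => (hAp' x hx).1)
    (fun x hx => (hBq' x hx).1)
  have hle := freeEnergy_massTransfer_le hUc hVi hρ hρα hA hB hAB hA0 hB0 hAp' hBq'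
  have hge := hmin _
    (integrable_of_mem_Icc (measurable_massTransfer hρ hA hB).aestronglyMeasurable
      (ae_of_all μ hρ'α)) (ae_of_all μ hρ'α)
    (integral_massTransfer (integrable_of_mem_Icc hρ.aestronglyMeasurable (ae_of_all μ hρα))
      hA hB hA0 hB0)
    (by rw [integral_abs_massTransfer_sub hA hB hAB hA0 hB0 ht.le]; linarith [htr])
  exact sub_nonneg.1 ((mul_nonneg_iff_of_pos_left ht).1 (by linarith))

theorem IsLocalMinimizer.measure_profitableSet_eq_zero_or (hmin : IsLocalMinimizer μ α U V ρ)
    (hUc : Continuous U) (hU : ConvexOn ℝ (Icc 0 α) U) (hV : Measurable V) (hVi : Integrable V μ)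
    (hρ : Measurable ρ) (hρα : ∀ x, ρ x ∈ Icc 0 α) (hpq : p < q) :
    μ (profitableSet α U V ρ p 1) = 0 ∨ μ (profitableSet α U V ρ q (-1)) = 0 := by
  by_contra! h
  obtain ⟨A, hA, hA0, h₁, hh₁, hAp⟩ := exists_uniform_isProfitable hUc hU hV hρ hρα h.1
  obtain ⟨B, hB, hB0, h₂, hh₂, hBq⟩ := exists_uniform_isProfitable hUc hU hV hρ hρα h.2
  simp only [mul_one, mul_neg_one] at hAp hBq
  have hAB : Disjoint A B := disjoint_left.2 fun x hxA hxB => by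
    have := hU.lt_of_isProfitable (hAp x hxA h₁ ⟨hh₁, le_rfl⟩) hh₁ (hBq x hxB h₂ ⟨hh₂, le_rfl⟩) hh₂
    linarith
  have := hmin.le_of_isProfitable hUc hVi hρ hρα hA hB hAB hA0 hB0 (lt_min hh₁ hh₂)
    (fun x hx τ hτ => hAp x hx τ ⟨hτ.1, hτ.2.trans (min_le_left _ _)⟩)
    (fun x hx τ hτ => hBq x hx τ ⟨hτ.1, hτ.2.trans (min_le_right _ _)⟩)
  linarith

theorem IsLocalMinimizer.exists_ae_isSubgradientOn (hmin : IsLocalMinimizer μ α U V ρ)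
    (hUc : Continuous U) (hU : ConvexOn ℝ (Icc 0 α) U)
    (hV : Measurable V) (hVi : Integrable V μ) (hρ : Measurable ρ) (hρα : ∀ x, ρ x ∈ Icc 0 α)
    (hmass₀ : 0 < ∫ x, ρ x ∂μ) (hmassα : ∫ x, ρ x ∂μ < α * μ.real univ) :
    ∃ C, ∀ᵐ x ∂μ, IsSubgradientOn U (Icc 0 α) (ρ x) (C - V x) := by
  have hadd : {x | ρ x < α} ⊆ {x | ∃ τ > 0, ρ x + τ * 1 ∈ Icc 0 α} := fun x (hx : ρ x < α) =>
    ⟨α - ρ x, sub_pos.2 hx, by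
      rw [mul_one, add_sub_cancel]; exact ⟨(hρα x).1.trans (hρα x).2, le_rfl⟩⟩
  have hremove : {x | 0 < ρ x} ⊆ {x | ∃ τ > 0, ρ x + τ * (-1) ∈ Icc 0 α} := fun x (hx : 0 < ρ x) =>
    ⟨ρ x, hx, by rw [mul_neg_one, add_neg_cancel]; exact ⟨le_rfl, (hρα x).1.trans (hρα x).2⟩⟩
  obtain ⟨C, hC⟩ := exists_ae_threshold (μ := μ) (A := fun p => profitableSet α U V ρ p 1)
    (B := fun q => profitableSet α U V ρ q (-1))
    (fun p p' hpp' x ⟨τ, hτ, h⟩ => ⟨τ, hτ, h.mono (by nlinarith)⟩)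
    (fun q q' hqq' x ⟨τ, hτ, h⟩ => ⟨τ, hτ, h.mono (by nlinarith)⟩)
    (fun p q hpq => hmin.measure_profitableSet_eq_zero_or hUc hU hV hVi hρ hρα hpq)
    (exists_measure_profitableSet_ne_zero one_ne_zero fun h0 =>
      measure_setOf_lt_ne_zero_of_integral_lt
        (integrable_of_mem_Icc hρ.aestronglyMeasurable (ae_of_all μ hρα)) hmassα
        (measure_mono_null hadd h0))
    (exists_measure_profitableSet_ne_zero (neg_ne_zero.2 one_ne_zero) fun h0 =>
      measure_setOf_pos_ne_zero_of_integral_pos hmass₀ (measure_mono_null hremove h0))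
  refine ⟨C, hC.mono fun x hx => isSubgradientOn_of_forall_not_isProfitable ?_ ?_⟩
  · intro w hw d hd hprof
    exact hx.1 (w + V x) (by linarith) ⟨d, hd, by rwa [mul_one, add_sub_cancel_right]⟩
  · intro w hw d hd hprof
    exact hx.2 (w + V x) (by linarith)
      ⟨-d, neg_pos.2 hd, by rwa [mul_neg_one, neg_neg, add_sub_cancel_right]⟩

end FirstVariation

theorem IsLocalMinimizer.congr {U₀ : ℝ → ℝ} {V₀ ρ₀ : X → ℝ} (h : IsLocalMinimizer μ α U V ρ)
    (hU : EqOn U U₀ (Icc 0 α)) (hV : V =ᵐ[μ] V₀) (hρ : ρ =ᵐ[μ] ρ₀)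
    (hρα : ∀ᵐ x ∂μ, ρ x ∈ Icc 0 α) : IsLocalMinimizer μ α U₀ V₀ ρ₀ := by
  obtain ⟨r, hr, hmin⟩ := h
  have henergy : ∀ σ σ₀ : X → ℝ, σ =ᵐ[μ] σ₀ → (∀ᵐ x ∂μ, σ x ∈ Icc 0 α) →
      freeEnergy μ U V σ = freeEnergy μ U₀ V₀ σ₀ := fun σ σ₀ hσ hσα =>
    integral_congr_ae <| by
      filter_upwards [hσ, hσα, hV] with x h₁ h₂ h₃
      rw [← h₁, ← h₃, hU h₂]
  refine ⟨r, hr, fun ρ' hi hρ'α hmass hdist => ?_⟩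
  rw [← henergy ρ ρ₀ hρ hρα, ← henergy ρ' ρ' EventuallyEq.rfl hρ'α]
  refine hmin ρ' hi hρ'α (hmass.trans (integral_congr_ae hρ).symm) ?_
  rwa [integral_congr_ae (hρ.mono fun x hx => by rw [hx])]

end

theorem euler_lagrange_conditions_general
    (d : ℕ) (Ω : Set (EuclideanSpace ℝ (Fin d)))
    (hΩ_meas : MeasurableSet Ω) (hΩ_bdd : Bornology.IsBounded Ω)
    (α : ℝ) (hα : 0 < α)
    (U : ℝ → ℝ) (hU_cont : ContinuousOn U (Icc 0 α)) (hU_conv : ConvexOn ℝ (Icc 0 α) U)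
    (V : EuclideanSpace ℝ (Fin d) → ℝ) (hV_cont : ContinuousOn V Ω)
    (hV_bdd : ∃ B : ℝ, ∀ x ∈ Ω, V x ≤ B) (hV_nonneg : ∀ x ∈ Ω, 0 ≤ V x)
    (U' : ℝ → ℝ)
    (hU'_deriv : ∀ s ∈ Ioo 0 α, HasDerivAt U (U' s) s)
    (ζl ζh : EReal)
    (hζl_lim : Tendsto (fun s : ℝ => (U' s : EReal)) (𝓝[>] (0:ℝ)) (𝓝 ζl))
    (hζh_lim : Tendsto (fun s : ℝ => (U' s : EReal)) (𝓝[<] α) (𝓝 ζh))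
    (M : ℝ) (hM_pos : 0 < M) (hM_lt : M < α * (volume Ω).toReal)
    (ρh : EuclideanSpace ℝ (Fin d) → ℝ)
    (hρh_int : Integrable ρh (volume.restrict Ω))
    (hρh_mem : ∀ᵐ x ∂(volume.restrict Ω), ρh x ∈ Icc 0 α)
    (hρh_mass : ∫ x in Ω, ρh x = M)
    (hρh_locmin : ∃ r : ℝ, 0 < r ∧
      ∀ ρ : EuclideanSpace ℝ (Fin d) → ℝ,
        Integrable ρ (volume.restrict Ω) →
        (∀ᵐ x ∂(volume.restrict Ω), ρ x ∈ Icc 0 α) →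
        (∫ x in Ω, ρ x) = M →
        (∫ x in Ω, |ρ x - ρh x|) < r →
        ∫ x in Ω, (U (ρh x) + V x * ρh x) ≤ ∫ x in Ω, (U (ρ x) + V x * ρ x)) :
    ∃ C : ℝ, ∀ᵐ x ∂(volume.restrict Ω),
      (ρh x ∈ Ioo 0 α → U' (ρh x) + V x = C) ∧
      (ρh x = 0 → ((C - V x : ℝ) : EReal) ≤ ζl) ∧
      (ρh x = α → ζh ≤ ((C - V x : ℝ) : EReal)) := by
  set μ := volume.restrict Ω
  have : IsFiniteMeasure μ := ⟨by simpa [μ] using hΩ_bdd.measure_lt_top⟩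
  obtain ⟨U₀, hU₀, hUU₀⟩ := exists_continuous_eqOn_Icc hα.le hU_cont
  obtain ⟨ρ₀, hρ₀, hρ₀α, hρρ₀⟩ := exists_measurable_mem_Icc_ae_eq hα.le hρh_int.aemeasurable hρh_mem
  have hVm : AEMeasurable V μ := hV_cont.aemeasurable hΩ_meas
  obtain ⟨B, hB⟩ := hV_bdd
  have hVi : Integrable V μ := Integrable.of_bound hVm.aestronglyMeasurable B <|
    (ae_restrict_mem hΩ_meas).mono fun x hx => by
      rw [Real.norm_of_nonneg (hV_nonneg x hx)]; exact hB x hx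
  have hmin : IsLocalMinimizer μ α U V ρh := by
    obtain ⟨r, hr, h⟩ := hρh_locmin
    exact ⟨r, hr, fun ρ h₁ h₂ h₃ => h ρ h₁ h₂ (h₃.trans hρh_mass)⟩
  have hmass : ∫ x, ρ₀ x ∂μ = M := (integral_congr_ae hρρ₀).symm.trans hρh_mass
  obtain ⟨C, hC⟩ := (hmin.congr hUU₀ hVm.ae_eq_mk hρρ₀ hρh_mem).exists_ae_isSubgradientOn hU₀
    (hU_conv.congr hUU₀) hVm.measurable_mk (hVi.congr hVm.ae_eq_mk) hρ₀ hρ₀α (hmass ▸ hM_pos)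
    (by rwa [hmass, measureReal_restrict_apply_univ, measureReal_def])
  refine ⟨C, ?_⟩
  filter_upwards [hC, hρρ₀, hVm.ae_eq_mk] with x hx hρx hVx
  have hsub : IsSubgradientOn U (Icc 0 α) (ρh x) (C - V x) := by
    rw [hρx, hVx]; exact hx.congr (hρ₀α x) hUU₀.symm
  refine ⟨fun hmem => ?_, fun h0 => ?_, fun hαx => ?_⟩
  · linarith [hsub.eq_of_hasDerivAt (Icc_mem_nhds hmem.1 hmem.2) (hU'_deriv _ hmem)]
  · rw [h0] at hsub
    exact hsub.coe_le_of_tendsto_nhdsGT hα hU_conv hU'_deriv hζl_lim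
  · rw [hαx] at hsub
    exact hsub.le_coe_of_tendsto_nhdsLT hα hU_conv hU'_deriv hζh_lim

/-- Euler–Lagrange conditions for L¹-local minimisers of the free energy on 𝒜_M. -/
theorem euler_lagrange_conditions
    (d : ℕ) (Ω : Set (EuclideanSpace ℝ (Fin d)))
    (hΩ_meas : MeasurableSet Ω) (hΩ_ne : Ω.Nonempty) (hΩ_open : IsOpen Ω)
    (hΩ_conn : IsConnected Ω) (hΩ_bdd : Bornology.IsBounded Ω)
    (α : ℝ) (hα : 0 < α)
    (U : ℝ → ℝ) (hU_cont : ContinuousOn U (Icc 0 α)) (hU_conv : ConvexOn ℝ (Icc 0 α) U)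
    (V : EuclideanSpace ℝ (Fin d) → ℝ) (hV_cont : ContinuousOn V Ω)
    (hV_bdd : ∃ B : ℝ, ∀ x ∈ Ω, V x ≤ B) (hV_nonneg : ∀ x ∈ Ω, 0 ≤ V x)
    (U' : ℝ → ℝ)
    (hU'_deriv : ∀ s ∈ Ioo 0 α, HasDerivAt U (U' s) s)
    (hU'_cont : ContinuousOn U' (Ioo 0 α))
    (hU'_mono : MonotoneOn U' (Ioo 0 α))
    (ζl ζh : EReal) (hζl_ne : ζl ≠ ⊤) (hζh_ne : ζh ≠ ⊥)
    (hζl_lim : Tendsto (fun s : ℝ => (U' s : EReal)) (𝓝[>] (0:ℝ)) (𝓝 ζl))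
    (hζh_lim : Tendsto (fun s : ℝ => (U' s : EReal)) (𝓝[<] α) (𝓝 ζh))
    (M : ℝ) (hM_pos : 0 < M) (hM_lt : M < α * (volume Ω).toReal)
    (ρh : EuclideanSpace ℝ (Fin d) → ℝ)
    (hρh_int : Integrable ρh (volume.restrict Ω))
    (hρh_mem : ∀ᵐ x ∂(volume.restrict Ω), ρh x ∈ Icc 0 α)
    (hρh_mass : ∫ x in Ω, ρh x = M)
    (hρh_locmin : ∃ r : ℝ, 0 < r ∧
      ∀ ρ : EuclideanSpace ℝ (Fin d) → ℝ,
        Integrable ρ (volume.restrict Ω) →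
        (∀ᵐ x ∂(volume.restrict Ω), ρ x ∈ Icc 0 α) →
        (∫ x in Ω, ρ x) = M →
        (∫ x in Ω, |ρ x - ρh x|) < r →
        ∫ x in Ω, (U (ρh x) + V x * ρh x) ≤ ∫ x in Ω, (U (ρ x) + V x * ρ x)) :
    ∃ C : ℝ, ∀ᵐ x ∂(volume.restrict Ω),
      (ρh x ∈ Ioo 0 α → U' (ρh x) + V x = C) ∧
      (ρh x = 0 → ((C - V x : ℝ) : EReal) ≤ ζl) ∧
      (ρh x = α → ζh ≤ ((C - V x : ℝ) : EReal)) :=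
  euler_lagrange_conditions_general d Ω hΩ_meas hΩ_bdd α hα U hU_cont hU_conv V hV_cont hV_bdd
    hV_nonneg U' hU'_deriv ζl ζh hζl_lim hζh_lim M hM_pos hM_lt ρh hρh_int hρh_mem hρh_mass
    hρh_locmin
end

section
/- Assume U′ is strictly increasing on (0,α). Then for every M ∈ (0, α|Ω|) there exists exactly one constant C ∈ ℝ such that ∫_Ω g(C − V(x)) dx = M, where g = T_{0,α}∘(U′)⁻¹. -/
/-!
Since `U'` is strictly increasing, `g` is a monotone function whose range lies between `Ioo 0 α`
and `Icc 0 α`; such a function is continuous with limits `0` at `-∞` and `α` at `+∞`. By dominated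
convergence, the mass `F C = ∫_Ω g (C - V)` is then continuous and increases from `0` to `α |Ω|`,
so every admissible mass is attained. It is attained only once: if `0 < F C < α |Ω|`, then by
connectedness of `Ω` some `x` has `0 < g (C - V x) < α`, where `g` is strictly increasing, and this
happens on a nonempty open set, which has positive measure.
-/

open Set MeasureTheory Filter Topology

section Order

variable {α β : Type*} [LinearOrder α] [LinearOrder β] [TopologicalSpace β] [OrderTopology β]

section Range

variable [DenselyOrdered β] {f : α → β} {a b : β}

theorem Monotone.tendsto_atBot_of_Ioo_subset_range (hab : a < b) (hf : Monotone f)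
    (hIoo : Ioo a b ⊆ range f) (hIcc : range f ⊆ Icc a b) : Tendsto f atBot (𝓝 a) :=
  tendsto_atBot_isGLB hf ((isGLB_Ioo hab).of_subset_of_superset (isGLB_Icc hab.le) hIoo hIcc)

theorem Monotone.tendsto_atTop_of_Ioo_subset_range (hab : a < b) (hf : Monotone f)
    (hIoo : Ioo a b ⊆ range f) (hIcc : range f ⊆ Icc a b) : Tendsto f atTop (𝓝 b) :=
  tendsto_atTop_isLUB hf ((isLUB_Ioo hab).of_subset_of_superset (isLUB_Icc hab.le) hIoo hIcc)

theorem Monotone.continuous_of_Ioo_subset_range [TopologicalSpace α] [OrderTopology α]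
    (hab : a < b)
    (hf : Monotone f) (hIoo : Ioo a b ⊆ range f) (hIcc : range f ⊆ Icc a b) : Continuous f := by
  let f' : α → Icc a b := codRestrict f _ fun x => hIcc (mem_range_self x)
  have hf' : Monotone f' := fun _ _ h => hf h
  have hdense : DenseRange f' := Subtype.dense_iff.2 <| by
    rw [← range_comp]
    exact (closure_Ioo hab.ne).symm.subset.trans (closure_mono hIoo)
  exact continuous_subtype_val.comp (hf'.continuous_of_denseRange hdense)

end Range

variable [TopologicalSpace α] [OrderTopology α] [DenselyOrdered α] {f : α → β} {a b s : α}
  {l : β}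

theorem StrictMonoOn.lt_of_tendsto_nhdsGT (hf : StrictMonoOn f (Ioo a b))
    (hl : Tendsto f (𝓝[>] a) (𝓝 l)) (hs : s ∈ Ioo a b) : l < f s := by
  obtain ⟨t, hat, hts⟩ := exists_between hs.1
  have ht : t ∈ Ioo a b := ⟨hat, hts.trans hs.2⟩
  have := nhdsGT_neBot_of_exists_gt ⟨s, hs.1⟩
  have hl_le : l ≤ f t := le_of_tendsto hl <| by
    filter_upwards [Ioo_mem_nhdsGT hat] with r hr
    exact (hf ⟨hr.1, hr.2.trans ht.2⟩ ht hr.2).le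
  exact hl_le.trans_lt (hf ht hs hts)

theorem StrictMonoOn.lt_of_tendsto_nhdsLT (hf : StrictMonoOn f (Ioo a b))
    (hl : Tendsto f (𝓝[<] b) (𝓝 l)) (hs : s ∈ Ioo a b) : f s < l := by
  obtain ⟨t, hst, htb⟩ := exists_between hs.2
  have ht : t ∈ Ioo a b := ⟨hs.1.trans hst, htb⟩
  have := nhdsLT_neBot_of_exists_lt ⟨s, hs.2⟩
  have hle_l : f t ≤ l := ge_of_tendsto hl <| by
    filter_upwards [Ioo_mem_nhdsLT htb] with r hr
    exact (hf ht ⟨ht.1.trans hr.1, hr.2⟩ hr.1).le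
  exact (hf hs ht hst).trans_le hle_l

end Order

/-- The paper's `g = T_{0,α} ∘ (U')⁻¹`, with `ζl`, `ζh` in the roles of `ζ̲ = U'(0⁺)`, `ζ̄ = U'(α⁻)`. -/
structure IsTruncatedInverse (U' g : ℝ → ℝ) (α : ℝ) (ζl ζh : EReal) : Prop where
  eq_zero : ∀ ζ : ℝ, (ζ : EReal) ≤ ζl → g ζ = 0
  eq_bound : ∀ ζ : ℝ, ζh ≤ (ζ : EReal) → g ζ = α
  mem_Ioo_and_apply_eq : ∀ ζ : ℝ, ζl < (ζ : EReal) → (ζ : EReal) < ζh →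
    g ζ ∈ Ioo 0 α ∧ U' (g ζ) = ζ

namespace IsTruncatedInverse

variable {U' g : ℝ → ℝ} {α : ℝ} {ζl ζh : EReal} {ζ ζ' : ℝ} (hg : IsTruncatedInverse U' g α ζl ζh)
include hg

theorem lt_of_pos (h : 0 < g ζ) : ζl < ζ := by
  by_contra! h'
  exact h.ne' (hg.eq_zero ζ h')

theorem lt_of_lt_bound (h : g ζ < α) : (ζ : EReal) < ζh := by
  by_contra! h'
  exact h.ne (hg.eq_bound ζ h')

theorem mem_Icc (hα : 0 ≤ α) (ζ : ℝ) : g ζ ∈ Icc 0 α := by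
  rcases le_or_gt (ζ : EReal) ζl with hl | hl
  · simp [hg.eq_zero ζ hl, hα]
  rcases le_or_gt ζh (ζ : EReal) with hh | hh
  · simp [hg.eq_bound ζ hh, hα]
  · exact Ioo_subset_Icc_self (hg.mem_Ioo_and_apply_eq ζ hl hh).1

theorem le_of_apply_le (hU' : MonotoneOn U' (Ioo 0 α)) (hle : g ζ' ≤ g ζ) (hpos : 0 < g ζ)
    (hlt : g ζ' < α) : ζ' ≤ ζ := by
  by_contra! h
  have hl : ζl < ζ := hg.lt_of_pos hpos
  have hh : (ζ' : EReal) < ζh := hg.lt_of_lt_bound hlt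
  obtain ⟨hmem, heq⟩ := hg.mem_Ioo_and_apply_eq ζ hl ((EReal.coe_lt_coe_iff.2 h).trans hh)
  obtain ⟨hmem', heq'⟩ := hg.mem_Ioo_and_apply_eq ζ' (hl.trans (EReal.coe_lt_coe_iff.2 h)) hh
  have := hU' hmem' hmem hle
  rw [heq, heq'] at this
  exact this.not_gt h

theorem monotone (hα : 0 ≤ α) (hU' : MonotoneOn U' (Ioo 0 α)) : Monotone g := by
  intro ζ ζ' h
  by_contra! hlt
  have hle := hg.le_of_apply_le hU' hlt.le ((hg.mem_Icc hα ζ').1.trans_lt hlt)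
    (hlt.trans_le (hg.mem_Icc hα ζ).2)
  rw [le_antisymm h hle] at hlt
  exact lt_irrefl _ hlt

theorem apply_lt_apply (hU' : MonotoneOn U' (Ioo 0 α)) (hζ : g ζ ∈ Ioo 0 α) (h : ζ < ζ') :
    g ζ < g ζ' := by
  by_contra! hle
  exact h.not_ge (hg.le_of_apply_le hU' hle hζ.1 (hle.trans_lt hζ.2))

theorem Ioo_subset_range (hU' : StrictMonoOn U' (Ioo 0 α))
    (hζl : Tendsto (fun s : ℝ => (U' s : EReal)) (𝓝[>] 0) (𝓝 ζl))
    (hζh : Tendsto (fun s : ℝ => (U' s : EReal)) (𝓝[<] α) (𝓝 ζh)) : Ioo 0 α ⊆ range g := by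
  intro s hs
  have hU'E : StrictMonoOn (fun s : ℝ => (U' s : EReal)) (Ioo 0 α) :=
    fun _ ha _ hb hab => EReal.coe_lt_coe_iff.2 (hU' ha hb hab)
  obtain ⟨hmem, heq⟩ := hg.mem_Ioo_and_apply_eq (U' s) (hU'E.lt_of_tendsto_nhdsGT hζl hs)
    (hU'E.lt_of_tendsto_nhdsLT hζh hs)
  exact ⟨U' s, hU'.injOn hmem hs heq⟩

end IsTruncatedInverse

section Mass

variable {X : Type*} [MeasurableSpace X] {μ : Measure X} {Ω : Set X} {V : X → ℝ} {g : ℝ → ℝ} {α : ℝ}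

theorem integrableOn_comp_sub (hμΩ : μ Ω < ⊤) (hV : AEMeasurable V (μ.restrict Ω))
    (hg : Measurable g) (hg_mem : ∀ ζ, g ζ ∈ Icc 0 α) (C : ℝ) :
    IntegrableOn (fun x => g (C - V x)) Ω μ :=
  (integrableOn_const hμΩ.ne).mono'
    (hg.comp_aemeasurable (aemeasurable_const.sub hV)).aestronglyMeasurable
    (ae_of_all _ fun _ => (Real.norm_of_nonneg (hg_mem _).1).trans_le (hg_mem _).2)

theorem tendsto_setIntegral_comp_sub {l : Filter ℝ} [l.IsCountablyGenerated] {G : X → ℝ}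
    (hμΩ : μ Ω < ⊤) (hV : AEMeasurable V (μ.restrict Ω)) (hg : Measurable g)
    (hg_mem : ∀ ζ, g ζ ∈ Icc 0 α) (hlim : ∀ x, Tendsto (fun C => g (C - V x)) l (𝓝 (G x))) :
    Tendsto (fun C => ∫ x in Ω, g (C - V x) ∂μ) l (𝓝 (∫ x in Ω, G x ∂μ)) :=
  tendsto_integral_filter_of_dominated_convergence (fun _ => α)
    (Eventually.of_forall fun C => (integrableOn_comp_sub hμΩ hV hg hg_mem C).aestronglyMeasurable)
    (Eventually.of_forall fun _ => ae_of_all _ fun _ =>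
      (Real.norm_of_nonneg (hg_mem _).1).trans_le (hg_mem _).2)
    (integrableOn_const hμΩ.ne) (ae_of_all _ hlim)

variable [TopologicalSpace X]

theorem exists_mem_Ioo_of_setIntegral_mem_Ioo {h : X → ℝ} (hΩ : MeasurableSet Ω)
    (hΩ_conn : IsPreconnected Ω) (hh : ContinuousOn h Ω) (h_mem : ∀ x ∈ Ω, h x ∈ Icc 0 α)
    (hint : ∫ x in Ω, h x ∂μ ∈ Ioo 0 (α * μ.real Ω)) : ∃ x ∈ Ω, h x ∈ Ioo 0 α := by
  obtain ⟨x₀, hx₀, h₀⟩ : ∃ x ∈ Ω, 0 < h x := by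
    by_contra! H
    have : ∫ x in Ω, h x ∂μ = 0 := by
      rw [setIntegral_congr_fun hΩ fun x hx => le_antisymm (H x hx) (h_mem x hx).1]
      simp
    exact hint.1.ne' this
  obtain ⟨x₁, hx₁, h₁⟩ : ∃ x ∈ Ω, h x < α := by
    by_contra! H
    have : ∫ x in Ω, h x ∂μ = α * μ.real Ω := by
      rw [setIntegral_congr_fun hΩ fun x hx => le_antisymm (h_mem x hx).2 (H x hx),
        setIntegral_const, smul_eq_mul, mul_comm]
    exact hint.2.ne this
  by_cases h₀_lt : h x₀ < α
  · exact ⟨x₀, hx₀, h₀, h₀_lt⟩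
  by_cases h₁_pos : 0 < h x₁
  · exact ⟨x₁, hx₁, h₁_pos, h₁⟩
  have hα : 0 < α := (h_mem x₁ hx₁).1.trans_lt h₁
  obtain ⟨x, hx, hxv⟩ := hΩ_conn.intermediate_value hx₁ hx₀ hh
    (show α / 2 ∈ Icc (h x₁) (h x₀) from ⟨by linarith, by linarith⟩)
  exact ⟨x, hx, by rw [hxv]; constructor <;> linarith⟩

variable [OpensMeasurableSpace X]

theorem strictMonoOn_setIntegral_comp_sub [μ.IsOpenPosMeasure] (hΩ_open : IsOpen Ω)
    (hΩ_conn : IsPreconnected Ω) (hμΩ : μ Ω < ⊤) (hV : ContinuousOn V Ω) (hg : Continuous g)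
    (hg_mono : Monotone g) (hg_mem : ∀ ζ, g ζ ∈ Icc 0 α)
    (hg_strict : ∀ ζ ζ', g ζ ∈ Ioo 0 α → ζ < ζ' → g ζ < g ζ') :
    StrictMonoOn (fun C => ∫ x in Ω, g (C - V x) ∂μ)
      ((fun C => ∫ x in Ω, g (C - V x) ∂μ) ⁻¹' Ioo 0 (α * μ.real Ω)) := by
  intro C₁ hC₁ C₂ _ hC
  have hint := integrableOn_comp_sub hμΩ (hV.aemeasurable hΩ_open.measurableSet) hg.measurable
    hg_mem
  have hcont : ContinuousOn (fun x => g (C₁ - V x)) Ω :=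
    hg.comp_continuousOn (continuousOn_const.sub hV)
  obtain ⟨x₀, hx₀, hmid⟩ := exists_mem_Ioo_of_setIntegral_mem_Ioo hΩ_open.measurableSet hΩ_conn
    hcont (fun x _ => hg_mem _) hC₁
  have hO : 0 < μ (Ω ∩ (fun x => g (C₁ - V x)) ⁻¹' Ioo 0 α) :=
    (hcont.isOpen_inter_preimage hΩ_open isOpen_Ioo).measure_pos μ ⟨x₀, hx₀, hmid⟩
  rw [← sub_pos, ← integral_sub (hint C₂) (hint C₁), setIntegral_pos_iff_support_of_nonneg_ae
    (ae_of_all _ fun x => sub_nonneg.2 (hg_mono (by linarith))) ((hint C₂).sub (hint C₁))]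
  refine hO.trans_le (measure_mono fun x hx => ⟨?_, hx.1⟩)
  exact sub_ne_zero.2 (hg_strict _ _ hx.2 (by linarith)).ne'

theorem existsUnique_setIntegral_comp_sub_eq [μ.IsOpenPosMeasure] (hΩ_open : IsOpen Ω)
    (hΩ_conn : IsPreconnected Ω) (hμΩ : μ Ω < ⊤) (hV : ContinuousOn V Ω) (hg : Continuous g)
    (hg_mono : Monotone g) (hg_mem : ∀ ζ, g ζ ∈ Icc 0 α) (hg_bot : Tendsto g atBot (𝓝 0))
    (hg_top : Tendsto g atTop (𝓝 α)) (hg_strict : ∀ ζ ζ', g ζ ∈ Ioo 0 α → ζ < ζ' → g ζ < g ζ')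
    {M : ℝ} (hM : M ∈ Ioo 0 (α * μ.real Ω)) : ∃! C : ℝ, ∫ x in Ω, g (C - V x) ∂μ = M := by
  have hVm := hV.aemeasurable hΩ_open.measurableSet (μ := μ)
  have hF_bot : Tendsto (fun C => ∫ x in Ω, g (C - V x) ∂μ) atBot (𝓝 0) := by
    simpa using tendsto_setIntegral_comp_sub hμΩ hVm hg.measurable hg_mem fun x =>
      hg_bot.comp (tendsto_atBot_add_const_right _ (-V x) tendsto_id)
  have hF_top : Tendsto (fun C => ∫ x in Ω, g (C - V x) ∂μ) atTop (𝓝 (α * μ.real Ω)) := by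
    simpa [mul_comm] using tendsto_setIntegral_comp_sub hμΩ hVm hg.measurable hg_mem fun x =>
      hg_top.comp (tendsto_atTop_add_const_right _ (-V x) tendsto_id)
  have hF_cont : Continuous fun C => ∫ x in Ω, g (C - V x) ∂μ :=
    continuous_iff_continuousAt.2 fun C => tendsto_setIntegral_comp_sub hμΩ hVm hg.measurable
      hg_mem fun x => hg.continuousAt.tendsto.comp ((continuous_sub_right (V x)).tendsto C)
  obtain ⟨C, hC : ∫ x in Ω, g (C - V x) ∂μ = M⟩ := mem_range_of_exists_le_of_exists_ge hF_cont
    (hF_bot.eventually (ge_mem_nhds hM.1)).exists (hF_top.eventually (le_mem_nhds hM.2)).exists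
  refine ⟨C, hC, fun C' (hC' : ∫ x in Ω, g (C' - V x) ∂μ = M) => ?_⟩
  exact (strictMonoOn_setIntegral_comp_sub hΩ_open hΩ_conn hμΩ hV hg hg_mono hg_mem
    hg_strict).injOn (by rwa [mem_preimage, hC']) (by rwa [mem_preimage, hC]) (hC'.trans hC.symm)

end Mass

theorem unique_mass_constant_general
    (d : ℕ) (Ω : Set (EuclideanSpace ℝ (Fin d)))
    (hΩ_open : IsOpen Ω)
    (hΩ_conn : IsConnected Ω) (hΩ_bdd : Bornology.IsBounded Ω)
    (α : ℝ) (hα : 0 < α)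
    (V : EuclideanSpace ℝ (Fin d) → ℝ) (hV_cont : ContinuousOn V Ω)
    (U' : ℝ → ℝ)
    (hU'_smono : StrictMonoOn U' (Ioo 0 α))
    (ζl ζh : EReal)
    (hζl_lim : Tendsto (fun s : ℝ => (U' s : EReal)) (𝓝[>] (0:ℝ)) (𝓝 ζl))
    (hζh_lim : Tendsto (fun s : ℝ => (U' s : EReal)) (𝓝[<] α) (𝓝 ζh))
    (g : ℝ → ℝ)
    (hg_low : ∀ ζ : ℝ, (ζ : EReal) ≤ ζl → g ζ = 0)
    (hg_high : ∀ ζ : ℝ, ζh ≤ (ζ : EReal) → g ζ = α)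
    (hg_mid : ∀ ζ : ℝ, ζl < (ζ : EReal) → (ζ : EReal) < ζh →
      g ζ ∈ Ioo 0 α ∧ U' (g ζ) = ζ)
    (M : ℝ) (hM_pos : 0 < M) (hM_lt : M < α * (volume Ω).toReal) :
    ∃! C : ℝ, ∫ x in Ω, g (C - V x) = M := by
  have hg : IsTruncatedInverse U' g α ζl ζh := ⟨hg_low, hg_high, hg_mid⟩
  have hg_mono := hg.monotone hα.le hU'_smono.monotoneOn
  have hIoo := hg.Ioo_subset_range hU'_smono hζl_lim hζh_lim
  have hIcc : range g ⊆ Icc 0 α := range_subset_iff.2 (hg.mem_Icc hα.le)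
  exact existsUnique_setIntegral_comp_sub_eq hΩ_open hΩ_conn.isPreconnected
    hΩ_bdd.measure_lt_top hV_cont (hg_mono.continuous_of_Ioo_subset_range hα hIoo hIcc) hg_mono
    (hg.mem_Icc hα.le) (hg_mono.tendsto_atBot_of_Ioo_subset_range hα hIoo hIcc)
    (hg_mono.tendsto_atTop_of_Ioo_subset_range hα hIoo hIcc)
    (fun _ _ => hg.apply_lt_apply hU'_smono.monotoneOn) ⟨hM_pos, hM_lt⟩

/-- When U′ is strictly increasing, for every admissible mass M there is exactly one
constant C with ∫_Ω T_{0,α}∘(U′)⁻¹(C − V(x)) dx = M. -/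
theorem unique_mass_constant
    (d : ℕ) (Ω : Set (EuclideanSpace ℝ (Fin d)))
    (hΩ_meas : MeasurableSet Ω) (hΩ_ne : Ω.Nonempty) (hΩ_open : IsOpen Ω)
    (hΩ_conn : IsConnected Ω) (hΩ_bdd : Bornology.IsBounded Ω)
    (α : ℝ) (hα : 0 < α)
    (U : ℝ → ℝ) (hU_cont : ContinuousOn U (Icc 0 α)) (hU_conv : ConvexOn ℝ (Icc 0 α) U)
    (V : EuclideanSpace ℝ (Fin d) → ℝ) (hV_cont : ContinuousOn V Ω)
    (hV_bdd : ∃ B : ℝ, ∀ x ∈ Ω, V x ≤ B) (hV_nonneg : ∀ x ∈ Ω, 0 ≤ V x)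
    (U' : ℝ → ℝ)
    (hU'_deriv : ∀ s ∈ Ioo 0 α, HasDerivAt U (U' s) s)
    (hU'_cont : ContinuousOn U' (Ioo 0 α))
    (hU'_smono : StrictMonoOn U' (Ioo 0 α))
    (ζl ζh : EReal) (hζl_ne : ζl ≠ ⊤) (hζh_ne : ζh ≠ ⊥)
    (hζl_lim : Tendsto (fun s : ℝ => (U' s : EReal)) (𝓝[>] (0:ℝ)) (𝓝 ζl))
    (hζh_lim : Tendsto (fun s : ℝ => (U' s : EReal)) (𝓝[<] α) (𝓝 ζh))
    (g : ℝ → ℝ)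
    (hg_low : ∀ ζ : ℝ, (ζ : EReal) ≤ ζl → g ζ = 0)
    (hg_high : ∀ ζ : ℝ, ζh ≤ (ζ : EReal) → g ζ = α)
    (hg_mid : ∀ ζ : ℝ, ζl < (ζ : EReal) → (ζ : EReal) < ζh →
      g ζ ∈ Ioo 0 α ∧ U' (g ζ) = ζ)
    (M : ℝ) (hM_pos : 0 < M) (hM_lt : M < α * (volume Ω).toReal) :
    ∃! C : ℝ, ∫ x in Ω, g (C - V x) = M :=
  unique_mass_constant_general d Ω hΩ_open hΩ_conn hΩ_bdd α hα V hV_cont U' hU'_smono ζl ζh hζl_lim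
    hζh_lim g hg_low hg_high hg_mid M hM_pos hM_lt
end

section
/- Let S_t : 𝒜 → 𝒜 (t ≥ 0) satisfy S₀ = id, S_{t+s} = S_t ∘ S_s for all t, s ≥ 0, and the L¹-contraction property ‖S_tρ − S_tη‖_{L¹} ≤ ‖ρ − η‖_{L¹} for all t ≥ 0 and ρ, η ∈ 𝒜. Let ρ₀, ρ∞ ∈ 𝒜, assume the map t ↦ S_tρ₀ is continuous from [0,∞) into L¹(μ), and assume there is a sequence tₙ → ∞ such that ∫₀¹ ‖S_{s+tₙ}ρ₀ − ρ∞‖_{L¹} ds → 0 as n → ∞. Then S_tρ∞ = ρ∞ for every t ≥ 0, and ‖S_tρ₀ − ρ∞‖_{L¹} → 0 as t → ∞. -/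
/-!
By contractivity, `d(S_h ρ∞, ρ∞) ≤ d(S_u ρ₀, ρ∞) + d(S_{u+h} ρ₀, ρ∞)` for every `u ≥ 0`.
Choosing `u ∈ [tₙ, tₙ + 1/2]` where the right-hand side is at most its mean bounds the left-hand
side by `4 ∫₀¹ d(S_{s+tₙ} ρ₀, ρ∞) ds → 0`, so `S_h ρ∞ = ρ∞` for `h ≤ 1/2`, hence for all `h ≥ 0`
by the semigroup law. Once `ρ∞` is stationary, contractivity makes `t ↦ d(S_t ρ₀, ρ∞)`
nonincreasing, and the same mean-value choice shows that it gets arbitrarily small.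
-/

open MeasureTheory Filter Topology Set

theorem exists_add_add_shift_le_integral {g : ℝ → ℝ} (hg : ContinuousOn g (Icc 0 1))
    (hg₀ : ∀ s ∈ Icc (0 : ℝ) 1, 0 ≤ g s) {h : ℝ} (h₀ : 0 ≤ h) (h₁ : h ≤ 1 / 2) :
    ∃ σ ∈ Icc (0 : ℝ) (1 / 2), g σ + g (σ + h) ≤ 4 * ∫ s in (0 : ℝ)..1, g s := by
  have hshift : MapsTo (· + h) (Icc (0 : ℝ) (1 / 2)) (Icc 0 1) :=
    fun s hs => ⟨by linarith [hs.1], by linarith [hs.2]⟩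
  have hg' : ContinuousOn g (uIcc 0 (1 / 2)) := by
    rw [uIcc_of_le (by norm_num)]
    exact hg.mono (Icc_subset_Icc_right (by norm_num))
  have hgh : ContinuousOn (fun s => g (s + h)) (uIcc 0 (1 / 2)) := by
    rw [uIcc_of_le (by norm_num)]
    exact hg.comp (continuousOn_id.add continuousOn_const) hshift
  have hle : ∀ a b : ℝ, 0 ≤ a → a ≤ b → b ≤ 1 → ∫ s in a..b, g s ≤ ∫ s in (0 : ℝ)..1, g s :=
    fun a b ha hab hb => intervalIntegral.integral_mono_interval ha hab hb
      (ae_restrict_of_forall_mem measurableSet_Ioc fun s hs => hg₀ s (Ioc_subset_Icc_self hs))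
      (hg.intervalIntegrable_of_Icc zero_le_one)
  have hint : ∫ s in (0 : ℝ)..1 / 2, (g s + g (s + h)) ≤ 2 * ∫ s in (0 : ℝ)..1, g s := by
    rw [intervalIntegral.integral_add hg'.intervalIntegrable hgh.intervalIntegrable,
      intervalIntegral.integral_comp_add_right, zero_add]
    linarith [hle 0 (1 / 2) le_rfl (by norm_num) (by norm_num),
      hle h (1 / 2 + h) h₀ (by linarith) (by linarith)]
  have hF : ContinuousOn (fun s => g s + g (s + h)) (uIcc 0 (1 / 2)) := hg'.add hgh
  obtain ⟨σ, hσ, hσavg⟩ := exists_eq_interval_average (by norm_num) hF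
  rw [interval_average_eq_div] at hσavg
  refine ⟨σ, Ioo_subset_Icc_self (by simpa [uIoo] using hσ), ?_⟩
  rw [hσavg, sub_zero, div_le_iff₀ (by norm_num)]
  linarith

theorem tendsto_zero_of_antitoneOn_Ici {f : ℝ → ℝ} {a : ℝ} (hf : AntitoneOn f (Ici a))
    (hf₀ : ∀ t ∈ Ici a, 0 ≤ f t) (hinf : ∀ ε > 0, ∃ u ∈ Ici a, f u < ε) :
    Tendsto f atTop (𝓝 0) := by
  refine tendsto_order.2 ⟨fun b hb => ?_, fun ε hε => ?_⟩
  · filter_upwards [eventually_ge_atTop a] with t ht using hb.trans_le (hf₀ t ht)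
  · obtain ⟨u, hu, hfu⟩ := hinf ε hε
    filter_upwards [eventually_ge_atTop u] with t ht
      using (hf hu (le_trans hu ht) ht).trans_lt hfu

theorem ContinuousOn.dist_comp_add_const {E : Type*} [PseudoMetricSpace E] {γ : ℝ → E}
    (hγ : ContinuousOn γ (Ici 0)) (η : E) {a : ℝ} (ha : 0 ≤ a) :
    ContinuousOn (fun s => dist (γ (s + a)) η) (Icc 0 1) :=
  (continuous_id.dist continuous_const).comp_continuousOn <|
    hγ.comp (continuous_add_const a).continuousOn fun _ hs => mem_Ici.2 (add_nonneg hs.1 ha)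

structure IsContractionSemigroupOn {E : Type*} [PseudoMetricSpace E] (S : ℝ → E → E)
    (A : Set E) : Prop where
  mapsTo : ∀ t, 0 ≤ t → MapsTo (S t) A A
  add_apply : ∀ t, 0 ≤ t → ∀ s, 0 ≤ s → ∀ ρ ∈ A, S (t + s) ρ = S t (S s ρ)
  dist_le : ∀ t, 0 ≤ t → ∀ ρ ∈ A, ∀ η ∈ A, dist (S t ρ) (S t η) ≤ dist ρ η

namespace IsContractionSemigroupOn

variable {E : Type*} [PseudoMetricSpace E] {S : ℝ → E → E} {A : Set E}

theorem dist_apply_self_le (hS : IsContractionSemigroupOn S A) {h : ℝ} (h₀ : 0 ≤ h) {ρ η : E}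
    (hρ : ρ ∈ A) (hη : η ∈ A) : dist (S h η) η ≤ dist ρ η + dist (S h ρ) η :=
  calc dist (S h η) η ≤ dist (S h η) (S h ρ) + dist (S h ρ) η := dist_triangle _ _ _
    _ ≤ dist η ρ + dist (S h ρ) η := by gcongr; exact hS.dist_le h h₀ η hη ρ hρ
    _ = dist ρ η + dist (S h ρ) η := by rw [dist_comm]

theorem dist_apply_self_le_four_mul_integral (hS : IsContractionSemigroupOn S A) {ρ η : E}
    (hρ : ρ ∈ A) (hη : η ∈ A) (hcont : ContinuousOn (fun t => S t ρ) (Ici 0)) {a : ℝ}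
    (ha : 0 ≤ a) {h : ℝ} (h₀ : 0 ≤ h) (h₁ : h ≤ 1 / 2) :
    dist (S h η) η ≤ 4 * ∫ s in (0 : ℝ)..1, dist (S (s + a) ρ) η := by
  obtain ⟨σ, hσ, hle⟩ := exists_add_add_shift_le_integral (hcont.dist_comp_add_const η ha)
    (fun _ _ => dist_nonneg) h₀ h₁
  have hσa : 0 ≤ σ + a := add_nonneg hσ.1 ha
  have hshift : S h (S (σ + a) ρ) = S (σ + h + a) ρ := by
    rw [← hS.add_apply h h₀ _ hσa ρ hρ, add_right_comm, add_comm h]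
  calc dist (S h η) η ≤ dist (S (σ + a) ρ) η + dist (S h (S (σ + a) ρ)) η :=
        hS.dist_apply_self_le h₀ (hS.mapsTo _ hσa hρ) hη
    _ ≤ _ := by rwa [hshift]

theorem dist_apply_antitoneOn (hS : IsContractionSemigroupOn S A) {η : E} (hη : η ∈ A)
    (hfix : ∀ t, 0 ≤ t → S t η = η) {ρ : E} (hρ : ρ ∈ A) :
    AntitoneOn (fun t => dist (S t ρ) η) (Ici 0) := by
  intro u hu t _ hut
  have htu : 0 ≤ t - u := sub_nonneg.2 hut
  calc dist (S t ρ) η = dist (S (t - u) (S u ρ)) (S (t - u) η) := by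
        rw [← hS.add_apply _ htu _ hu ρ hρ, sub_add_cancel, hfix _ htu]
    _ ≤ dist (S u ρ) η := hS.dist_le _ htu _ (hS.mapsTo u hu hρ) _ hη

theorem apply_eq_of_forall_mem_Icc (hS : IsContractionSemigroupOn S A) {δ : ℝ} (hδ : 0 < δ)
    {η : E} (hη : η ∈ A)
    (hfix : ∀ h ∈ Icc 0 δ, S h η = η) (t : ℝ) (ht : 0 ≤ t) : S t η = η := by
  obtain ⟨k, hk⟩ := exists_nat_ge (t / δ)
  induction k generalizing t with
  | zero =>
    rw [Nat.cast_zero, div_le_iff₀ hδ, zero_mul] at hk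
    exact hfix t ⟨ht, hk.trans hδ.le⟩
  | succ k ih =>
    rcases le_or_gt t δ with htδ | htδ
    · exact hfix t ⟨ht, htδ⟩
    have h₀ : 0 ≤ t - δ := by linarith
    rw [← sub_add_cancel t δ, hS.add_apply _ h₀ _ hδ.le η hη, hfix δ ⟨hδ.le, le_rfl⟩]
    refine ih _ h₀ ?_
    rw [sub_div, div_self hδ.ne']
    push_cast at hk
    linarith

end IsContractionSemigroupOn

theorem semigroup_longtime_convergence_general
    {X : Type*} [MeasurableSpace X] (μ : Measure X)
    (A : Set (Lp ℝ 1 μ))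
    (S : ℝ → Lp ℝ 1 μ → Lp ℝ 1 μ)
    (hSA : ∀ t : ℝ, 0 ≤ t → ∀ ρ ∈ A, S t ρ ∈ A)
    (hSadd : ∀ t : ℝ, 0 ≤ t → ∀ s : ℝ, 0 ≤ s → ∀ ρ ∈ A, S (t + s) ρ = S t (S s ρ))
    (hScontr : ∀ t : ℝ, 0 ≤ t → ∀ ρ ∈ A, ∀ η ∈ A, ‖S t ρ - S t η‖ ≤ ‖ρ - η‖)
    (ρ₀ : Lp ℝ 1 μ) (hρ₀ : ρ₀ ∈ A)
    (ρinf : Lp ℝ 1 μ) (hρinf : ρinf ∈ A)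
    (hcont : ContinuousOn (fun t : ℝ => S t ρ₀) (Set.Ici 0))
    (tseq : ℕ → ℝ) (htseq : Tendsto tseq atTop atTop)
    (hconv : Tendsto (fun n => ∫ s in (0:ℝ)..1, ‖S (s + tseq n) ρ₀ - ρinf‖) atTop (𝓝 0)) :
    (∀ t : ℝ, 0 ≤ t → S t ρinf = ρinf) ∧
    Tendsto (fun t : ℝ => ‖S t ρ₀ - ρinf‖) atTop (𝓝 0) := by
  have hS : IsContractionSemigroupOn S A :=
    ⟨hSA, hSadd, by simpa only [dist_eq_norm] using hScontr⟩
  simp_rw [← dist_eq_norm] at hconv ⊢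
  have hsmall : ∀ h ∈ Icc (0 : ℝ) (1 / 2), S h ρinf = ρinf := fun h hh =>
    dist_le_zero.1 <| ge_of_tendsto (by simpa using hconv.const_mul 4) <|
      (htseq.eventually_ge_atTop 0).mono fun n hn =>
        hS.dist_apply_self_le_four_mul_integral hρ₀ hρinf hcont hn hh.1 hh.2
  have hfix := hS.apply_eq_of_forall_mem_Icc one_half_pos hρinf hsmall
  refine ⟨hfix, tendsto_zero_of_antitoneOn_Ici (hS.dist_apply_antitoneOn hρinf hfix hρ₀)
    (fun _ _ => dist_nonneg) fun ε hε => ?_⟩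
  obtain ⟨n, hn, hIn⟩ := ((htseq.eventually_ge_atTop 0).and
    (hconv.eventually (gt_mem_nhds (by positivity : 0 < ε / 4)))).exists
  obtain ⟨σ, hσ, hle⟩ := exists_add_add_shift_le_integral
    (hcont.dist_comp_add_const ρinf hn) (fun _ _ => dist_nonneg)
    le_rfl (by norm_num)
  refine ⟨σ + tseq n, mem_Ici.2 (add_nonneg hσ.1 hn), ?_⟩
  simp only [add_zero] at hle
  linarith

/-- Abstract long-time convergence for a C₀-semigroup of L¹-contractions: if the orbit
converges to a profile in L¹((0,1); L¹(μ)) along a sequence of times tending to infinity,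
then the profile is stationary and the whole orbit converges to it in L¹ as t → ∞. -/
theorem semigroup_longtime_convergence
    {X : Type*} [MeasurableSpace X] (μ : Measure X)
    (A : Set (Lp ℝ 1 μ))
    (S : ℝ → Lp ℝ 1 μ → Lp ℝ 1 μ)
    (hSA : ∀ t : ℝ, 0 ≤ t → ∀ ρ ∈ A, S t ρ ∈ A)
    (hS0 : ∀ ρ ∈ A, S 0 ρ = ρ)
    (hSadd : ∀ t : ℝ, 0 ≤ t → ∀ s : ℝ, 0 ≤ s → ∀ ρ ∈ A, S (t + s) ρ = S t (S s ρ))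
    (hScontr : ∀ t : ℝ, 0 ≤ t → ∀ ρ ∈ A, ∀ η ∈ A, ‖S t ρ - S t η‖ ≤ ‖ρ - η‖)
    (ρ₀ : Lp ℝ 1 μ) (hρ₀ : ρ₀ ∈ A)
    (ρinf : Lp ℝ 1 μ) (hρinf : ρinf ∈ A)
    (hcont : ContinuousOn (fun t : ℝ => S t ρ₀) (Set.Ici 0))
    (tseq : ℕ → ℝ) (htseq : Tendsto tseq atTop atTop)
    (hconv : Tendsto (fun n => ∫ s in (0:ℝ)..1, ‖S (s + tseq n) ρ₀ - ρinf‖) atTop (𝓝 0)) :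
    (∀ t : ℝ, 0 ≤ t → S t ρinf = ρinf) ∧
    Tendsto (fun t : ℝ => ‖S t ρ₀ - ρinf‖) atTop (𝓝 0) :=
  semigroup_longtime_convergence_general μ A S hSA hSadd hScontr ρ₀ hρ₀ ρinf hρinf hcont tseq htseq
    hconv
end

section
/- Let ρ̲, ρ̄ ∈ ℝ^N and let H : Q → ℝ^N be mass-conserving and monotone on the coordinate box Q spanned by ρ̲ and ρ̄. Suppose f̲, f̄, g̲, ḡ ∈ ℝ^N satisfy |H_i(ρ̲) − f̲_i| ≤ g̲_i and |H_i(ρ̄) − f̄_i| ≤ ḡ_i for all i. Then Σ_{i=1}^N |ρ̲_i − ρ̄_i| ≤ Σ_{i=1}^N |f̲_i − f̄_i| + 2·Σ_{i=1}^N max(g̲_i, ḡ_i), and Σ_{i=1}^N (ρ̲_i − ρ̄_i)⁺ ≤ Σ_{i=1}^N (f̲_i − f̄_i)⁺ + 2·Σ_{i=1}^N max(g̲_i, ḡ_i). -/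
/-!
Let `m = ρ̲ ⊓ ρ̄`. Mass conservation turns `∑ (ρ̲ - ρ̄)⁺ = ∑ (ρ̲ - m)` into `∑ (H ρ̲ - H m)`. Where
`ρ̲_i ≤ ρ̄_i` the states `m` and `ρ̲` agree at `i` and `ρ̲ ≥ m` elsewhere, so monotonicity gives
`H_i ρ̲ ≤ H_i m`; otherwise `m` and `ρ̄` agree at `i` and `H_i ρ̄ ≤ H_i m`. Either way
`H_i ρ̲ - H_i m ≤ (H_i ρ̲ - H_i ρ̄)⁺`, so `∑ (ρ̲ - ρ̄)⁺ ≤ ∑ (H ρ̲ - H ρ̄)⁺`, and symmetrically for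
the absolute values. The approximations `f̲, f̄` of `H ρ̲, H ρ̄` then cost at most `g̲_i + ḡ_i`
per coordinate.
-/

open Finset

section

variable {ι α : Type*} [AddCommGroup α] [LinearOrder α] [IsOrderedAddMonoid α]

def MassConservingOn [Fintype ι] (H : (ι → α) → ι → α) (Q : Set (ι → α)) : Prop :=
  ∀ ρ ∈ Q, ∑ i, H ρ i = ∑ i, ρ i

def OffDiagAntitoneOn (H : (ι → α) → ι → α) (Q : Set (ι → α)) : Prop :=
  ∀ i, ∀ ρ ∈ Q, ∀ σ ∈ Q, σ i = ρ i → (∀ j ≠ i, ρ j ≤ σ j) → H σ i ≤ H ρ i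

theorem OffDiagAntitoneOn.apply_sub_apply_inf_le_posPart {H : (ι → α) → ι → α}
    {Q : Set (ι → α)} (hH : OffDiagAntitoneOn H Q) {u v : ι → α} (hu : u ∈ Q) (hv : v ∈ Q)
    (huv : u ⊓ v ∈ Q) (i : ι) : H u i - H (u ⊓ v) i ≤ (H u i - H v i)⁺ := by
  rcases le_total (u i) (v i) with h | h
  · have hle : H u i ≤ H (u ⊓ v) i :=
      hH i _ huv u hu (inf_eq_left.2 h).symm fun j _ ↦ inf_le_left
    exact (sub_nonpos.2 hle).trans (posPart_nonneg _)
  · have hle : H v i ≤ H (u ⊓ v) i :=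
      hH i _ huv v hv (inf_eq_right.2 h).symm fun j _ ↦ inf_le_right
    exact (sub_le_sub_left hle _).trans (le_posPart _)

variable [Fintype ι] {H : (ι → α) → ι → α} {Q : Set (ι → α)}

theorem MassConservingOn.sum_posPart_sub_le (hmass : MassConservingOn H Q)
    (hmono : OffDiagAntitoneOn H Q) {u v : ι → α} (hu : u ∈ Q) (hv : v ∈ Q) (huv : u ⊓ v ∈ Q) :
    ∑ i, (u i - v i)⁺ ≤ ∑ i, (H u i - H v i)⁺ :=
  calc ∑ i, (u i - v i)⁺ = ∑ i, (u i - (u ⊓ v) i) := by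
        simp only [Pi.inf_apply, inf_eq_sub_posPart_sub, sub_sub_cancel]
    _ = ∑ i, (H u i - H (u ⊓ v) i) := by
        rw [sum_sub_distrib, sum_sub_distrib, hmass u hu, hmass _ huv]
    _ ≤ ∑ i, (H u i - H v i)⁺ :=
        sum_le_sum fun i _ ↦ hmono.apply_sub_apply_inf_le_posPart hu hv huv i

theorem MassConservingOn.sum_abs_sub_le (hmass : MassConservingOn H Q)
    (hmono : OffDiagAntitoneOn H Q) {u v : ι → α} (hu : u ∈ Q) (hv : v ∈ Q) (huv : u ⊓ v ∈ Q) :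
    ∑ i, |u i - v i| ≤ ∑ i, |H u i - H v i| := by
  have hvu : v ⊓ u ∈ Q := inf_comm u v ▸ huv
  simp only [← posPart_add_negPart, ← posPart_neg, neg_sub, sum_add_distrib]
  exact add_le_add (hmass.sum_posPart_sub_le hmono hu hv huv)
    (hmass.sum_posPart_sub_le hmono hv hu hvu)

theorem abs_sub_le_abs_sub_add {a b f g s t : α} (ha : |a - f| ≤ s) (hb : |b - g| ≤ t) :
    |a - b| ≤ |f - g| + (s + t) :=
  calc |a - b| ≤ |a - f| + (|f - g| + |g - b|) :=
        (abs_sub_le a f b).trans (add_le_add_right (abs_sub_le f g b) _)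
    _ ≤ s + (|f - g| + t) := by rw [abs_sub_comm g b]; gcongr
    _ = |f - g| + (s + t) := by abel

theorem posPart_sub_le_posPart_sub_add {a b f g s t : α} (ha : |a - f| ≤ s) (hb : |b - g| ≤ t) :
    (a - b)⁺ ≤ (f - g)⁺ + (s + t) := by
  have hst : 0 ≤ s + t := add_nonneg ((abs_nonneg _).trans ha) ((abs_nonneg _).trans hb)
  refine sup_le ?_ (add_nonneg (posPart_nonneg _) hst)
  calc a - b = (a - f) + (f - g) + (g - b) := by abel
    _ ≤ s + (f - g)⁺ + t := by
        gcongr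
        exacts [(abs_sub_le_iff.1 ha).1, le_posPart _, (abs_sub_le_iff.1 hb).2]
    _ = (f - g)⁺ + (s + t) := by abel

end

/-- L¹ continuous dependence for mass-conserving monotone maps on a coordinate box. -/
theorem discrete_L1_continuous_dependence
    (N : ℕ) (ρl ρu : Fin N → ℝ)
    (H : (Fin N → ℝ) → (Fin N → ℝ))
    (hmass : ∀ ρ : Fin N → ℝ,
      (∀ i, min (ρl i) (ρu i) ≤ ρ i ∧ ρ i ≤ max (ρl i) (ρu i)) →
      ∑ i, H ρ i = ∑ i, ρ i)
    (hmono : ∀ i : Fin N, ∀ ρ σ : Fin N → ℝ,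
      (∀ j, min (ρl j) (ρu j) ≤ ρ j ∧ ρ j ≤ max (ρl j) (ρu j)) →
      (∀ j, min (ρl j) (ρu j) ≤ σ j ∧ σ j ≤ max (ρl j) (ρu j)) →
      σ i = ρ i → (∀ j, j ≠ i → ρ j ≤ σ j) → H σ i ≤ H ρ i)
    (fl fu gl gu : Fin N → ℝ)
    (hfl : ∀ i, |H ρl i - fl i| ≤ gl i)
    (hfu : ∀ i, |H ρu i - fu i| ≤ gu i) :
    (∑ i, |ρl i - ρu i| ≤ ∑ i, |fl i - fu i| + 2 * ∑ i, max (gl i) (gu i)) ∧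
    (∑ i, max (ρl i - ρu i) 0 ≤ ∑ i, max (fl i - fu i) 0 + 2 * ∑ i, max (gl i) (gu i)) := by
  have hQ : ∀ ρ ∈ Set.uIcc ρl ρu, ∀ i, min (ρl i) (ρu i) ≤ ρ i ∧ ρ i ≤ max (ρl i) (ρu i) :=
    fun ρ hρ i ↦ ⟨hρ.1 i, hρ.2 i⟩
  have hmassQ : MassConservingOn H (Set.uIcc ρl ρu) := fun ρ hρ ↦ hmass ρ (hQ ρ hρ)
  have hmonoQ : OffDiagAntitoneOn H (Set.uIcc ρl ρu) :=
    fun i ρ hρ σ hσ ↦ hmono i ρ σ (hQ ρ hρ) (hQ σ hσ)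
  have hinf : ρl ⊓ ρu ∈ Set.uIcc ρl ρu := ⟨le_rfl, inf_le_sup⟩
  have hg : ∑ i, (gl i + gu i) ≤ 2 * ∑ i, max (gl i) (gu i) := by
    rw [mul_sum]
    gcongr with i
    linarith [le_max_left (gl i) (gu i), le_max_right (gl i) (gu i)]
  constructor
  · calc ∑ i, |ρl i - ρu i| ≤ ∑ i, |H ρl i - H ρu i| :=
          hmassQ.sum_abs_sub_le hmonoQ Set.left_mem_uIcc Set.right_mem_uIcc hinf
      _ ≤ ∑ i, (|fl i - fu i| + (gl i + gu i)) :=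
          sum_le_sum fun i _ ↦ abs_sub_le_abs_sub_add (hfl i) (hfu i)
      _ ≤ _ := by rw [sum_add_distrib]; exact add_le_add le_rfl hg
  · calc ∑ i, (ρl i - ρu i)⁺ ≤ ∑ i, (H ρl i - H ρu i)⁺ :=
          hmassQ.sum_posPart_sub_le hmonoQ Set.left_mem_uIcc Set.right_mem_uIcc hinf
      _ ≤ ∑ i, ((fl i - fu i)⁺ + (gl i + gu i)) :=
          sum_le_sum fun i _ ↦ posPart_sub_le_posPart_sub_add (hfl i) (hfu i)
      _ ≤ _ := by rw [sum_add_distrib]; exact add_le_add le_rfl hg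
end

section
/- Assume m¹, m² : [0,α] → [0,∞) with m¹ nondecreasing and m² nonincreasing, and assume U′ : [0,α] → ℝ is nondecreasing. Then for every λ ≥ 0: (a) Σ_{i=1}^N H_i(λ,ρ) = Σ_{i=1}^N ρ_i for every ρ ∈ [0,α]^N (mass conservation); (b) for every index i and all ρ, σ ∈ [0,α]^N with σ_i = ρ_i and σ_j ≥ ρ_j for all j ≠ i, one has H_i(λ,σ) ≤ H_i(λ,ρ) (off-diagonal monotonicity of the upwind scheme). -/
open Set Finset

/-- Velocity v_{k+1/2} at the interface between cells k and k+1 (0-based). -/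
noncomputable def vel (N : ℕ) (Δx : ℝ) (V : Fin N → ℝ) (U' : ℝ → ℝ)
    (ρ : Fin N → ℝ) (k : ℕ) : ℝ :=
  if h : k + 1 < N then
    -(((U' (ρ ⟨k + 1, h⟩) + V ⟨k + 1, h⟩) -
        (U' (ρ ⟨k, Nat.lt_of_succ_lt h⟩) + V ⟨k, Nat.lt_of_succ_lt h⟩)) / Δx)
  else 0

/-- Upwind numerical flux F_{k+1/2} at the interface between cells k and k+1
(0-based), with the no-flux convention at the boundary. -/
noncomputable def numFlux (N : ℕ) (Δx : ℝ) (V : Fin N → ℝ) (m1 m2 U' : ℝ → ℝ)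
    (ρ : Fin N → ℝ) (k : ℕ) : ℝ :=
  if h : k + 1 < N then
    m1 (ρ ⟨k, Nat.lt_of_succ_lt h⟩) * m2 (ρ ⟨k + 1, h⟩) *
        max (vel N Δx V U' ρ k) 0 +
      m1 (ρ ⟨k + 1, h⟩) * m2 (ρ ⟨k, Nat.lt_of_succ_lt h⟩) *
        min (vel N Δx V U' ρ k) 0
  else 0

/-- One implicit Euler step map H_i(λ, ρ) = ρ_i + λ(Δt/Δx)(F_{i+1/2} − F_{i−1/2}). -/
noncomputable def Hmap (N : ℕ) (Δx Δt : ℝ) (V : Fin N → ℝ) (m1 m2 U' : ℝ → ℝ)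
    (lam : ℝ) (ρ : Fin N → ℝ) (i : Fin N) : ℝ :=
  ρ i + lam * (Δt / Δx) *
    (numFlux N Δx V m1 m2 U' ρ i -
      if (i : ℕ) = 0 then 0 else numFlux N Δx V m1 m2 U' ρ ((i : ℕ) - 1))

/-!
Mass conservation is a telescoping sum: the scheme is in conservation form and the boundary
fluxes vanish. Off-diagonal monotonicity holds because the upwind flux `F_{k+1/2}` is
nondecreasing in the left state `ρ_k` and nonincreasing in the right state `ρ_{k+1}`: the
velocity has these monotonicities since `U'` is nondecreasing, and the mobility weights
`m¹(ρ_k) m²(ρ_{k+1})` in front of `max v 0 ≥ 0` and `m¹(ρ_{k+1}) m²(ρ_k)` in front of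
`min v 0 ≤ 0` have them since `m¹` is nondecreasing and `m²` nonincreasing. Raising a neighbour
of cell `i` therefore lowers the outflow `F_{i+1/2}` and raises the inflow `F_{i-1/2}`.
-/

lemma mul_max_zero_add_mul_min_zero_le {a a' b b' v v' : ℝ} (ha : 0 ≤ a) (hb' : 0 ≤ b')
    (haa : a ≤ a') (hbb : b' ≤ b) (hv : v ≤ v') :
    a * max v 0 + b * min v 0 ≤ a' * max v' 0 + b' * min v' 0 := by
  have hpos : a * max v 0 ≤ a' * max v' 0 :=
    mul_le_mul haa (max_le_max_right 0 hv) (le_max_right _ _) (ha.trans haa)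
  have hneg : b * min v 0 ≤ b' * min v' 0 :=
    calc b * min v 0 ≤ b' * min v 0 := mul_le_mul_of_nonpos_right hbb (min_le_right _ _)
      _ ≤ b' * min v' 0 := mul_le_mul_of_nonneg_left (min_le_min_right 0 hv) hb'
  exact add_le_add hpos hneg

lemma Fin.sum_sub_prev_eq (N : ℕ) (f : ℕ → ℝ) :
    ∑ i : Fin N, (f i - if (i : ℕ) = 0 then 0 else f (i - 1)) =
      if N = 0 then 0 else f (N - 1) := by
  set g : ℕ → ℝ := fun k => if k = 0 then 0 else f (k - 1)
  have hsummand (i : Fin N) :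
      (f i - if (i : ℕ) = 0 then 0 else f (i - 1)) = g (i + 1) - g i := by
    simp [g]
  rw [Finset.sum_congr rfl fun i _ => hsummand i,
    Fin.sum_univ_eq_sum_range (fun k => g (k + 1) - g k), Finset.sum_range_sub]
  simp [g]

section UpwindScheme

variable {N : ℕ} {Δx : ℝ} {V : Fin N → ℝ} {m1 m2 U' : ℝ → ℝ}

lemma numFlux_of_le {ρ : Fin N → ℝ} {k : ℕ} (hk : N ≤ k + 1) :
    numFlux N Δx V m1 m2 U' ρ k = 0 :=
  dif_neg (by omega)

lemma sum_Hmap_eq_sum (Δt lam : ℝ) (ρ : Fin N → ℝ) :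
    ∑ i, Hmap N Δx Δt V m1 m2 U' lam ρ i = ∑ i, ρ i := by
  have htelescope := Fin.sum_sub_prev_eq N (numFlux N Δx V m1 m2 U' ρ)
  rw [numFlux_of_le (by omega), ite_self] at htelescope
  simp only [Hmap, Finset.sum_add_distrib, ← Finset.mul_sum] at htelescope ⊢
  rw [htelescope, mul_zero, add_zero]

lemma vel_le_vel (hΔx : 0 ≤ Δx) {ρ σ : Fin N → ℝ} {k : ℕ} (hk : k + 1 < N)
    (hleft : U' (ρ ⟨k, by omega⟩) ≤ U' (σ ⟨k, by omega⟩))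
    (hright : U' (σ ⟨k + 1, hk⟩) ≤ U' (ρ ⟨k + 1, hk⟩)) :
    vel N Δx V U' ρ k ≤ vel N Δx V U' σ k := by
  rw [vel, dif_pos hk, vel, dif_pos hk, neg_le_neg_iff]
  exact div_le_div_of_nonneg_right (by linarith) hΔx

variable {α : ℝ}
  (hm1_nonneg : ∀ s ∈ Icc 0 α, 0 ≤ m1 s) (hm1_mono : MonotoneOn m1 (Icc 0 α))
  (hm2_nonneg : ∀ s ∈ Icc 0 α, 0 ≤ m2 s) (hm2_anti : AntitoneOn m2 (Icc 0 α))
  (hU'_mono : MonotoneOn U' (Icc 0 α))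
include hm1_nonneg hm1_mono hm2_nonneg hm2_anti hU'_mono

lemma numFlux_le_numFlux (hΔx : 0 ≤ Δx) {ρ σ : Fin N → ℝ}
    (hρ : ∀ j, ρ j ∈ Icc 0 α) (hσ : ∀ j, σ j ∈ Icc 0 α) {k : ℕ}
    (hleft : ∀ j : Fin N, (j : ℕ) = k → ρ j ≤ σ j)
    (hright : ∀ j : Fin N, (j : ℕ) = k + 1 → σ j ≤ ρ j) :
    numFlux N Δx V m1 m2 U' ρ k ≤ numFlux N Δx V m1 m2 U' σ k := by
  by_cases hk : k + 1 < N
  · set l : Fin N := ⟨k, by omega⟩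
    set r : Fin N := ⟨k + 1, hk⟩
    have hl : ρ l ≤ σ l := hleft l rfl
    have hr : σ r ≤ ρ r := hright r rfl
    rw [numFlux, dif_pos hk, numFlux, dif_pos hk]
    exact mul_max_zero_add_mul_min_zero_le
      (mul_nonneg (hm1_nonneg _ (hρ l)) (hm2_nonneg _ (hρ r)))
      (mul_nonneg (hm1_nonneg _ (hσ r)) (hm2_nonneg _ (hσ l)))
      (mul_le_mul (hm1_mono (hρ l) (hσ l) hl) (hm2_anti (hσ r) (hρ r) hr)
        (hm2_nonneg _ (hρ r)) (hm1_nonneg _ (hσ l)))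
      (mul_le_mul (hm1_mono (hσ r) (hρ r) hr) (hm2_anti (hρ l) (hσ l) hl)
        (hm2_nonneg _ (hσ l)) (hm1_nonneg _ (hρ r)))
      (vel_le_vel hΔx hk (hU'_mono (hρ l) (hσ l) hl) (hU'_mono (hσ r) (hρ r) hr))
  · rw [numFlux_of_le (by omega), numFlux_of_le (by omega)]

lemma Hmap_le_Hmap {Δt lam : ℝ} (hΔx : 0 ≤ Δx) (hΔt : 0 ≤ Δt) (hlam : 0 ≤ lam)
    {ρ σ : Fin N → ℝ} (hρ : ∀ j, ρ j ∈ Icc 0 α) (hσ : ∀ j, σ j ∈ Icc 0 α) {i : Fin N}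
    (hi : σ i = ρ i) (hle : ∀ j, j ≠ i → ρ j ≤ σ j) :
    Hmap N Δx Δt V m1 m2 U' lam σ i ≤ Hmap N Δx Δt V m1 m2 U' lam ρ i := by
  have houtflow : numFlux N Δx V m1 m2 U' σ i ≤ numFlux N Δx V m1 m2 U' ρ i :=
    numFlux_le_numFlux hm1_nonneg hm1_mono hm2_nonneg hm2_anti hU'_mono hΔx hσ hρ
      (fun j hj => by rw [Fin.ext hj, hi])
      (fun j hj => hle j fun h => by omega)
  have hinflow (hi0 : (i : ℕ) ≠ 0) :
      numFlux N Δx V m1 m2 U' ρ (i - 1) ≤ numFlux N Δx V m1 m2 U' σ (i - 1) :=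
    numFlux_le_numFlux hm1_nonneg hm1_mono hm2_nonneg hm2_anti hU'_mono hΔx hρ hσ
      (fun j hj => hle j fun h => by omega)
      (fun j hj => by rw [Fin.ext (by omega : (j : ℕ) = i), hi])
  have hfluxDiff : (numFlux N Δx V m1 m2 U' σ i -
        if (i : ℕ) = 0 then 0 else numFlux N Δx V m1 m2 U' σ (i - 1)) ≤
      (numFlux N Δx V m1 m2 U' ρ i -
        if (i : ℕ) = 0 then 0 else numFlux N Δx V m1 m2 U' ρ (i - 1)) := by
    split_ifs with hi0
    · linarith
    · linarith [hinflow hi0]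
  rw [Hmap, Hmap, hi]
  exact add_le_add_right
    (mul_le_mul_of_nonneg_left hfluxDiff (mul_nonneg hlam (div_nonneg hΔt hΔx))) _

end UpwindScheme

theorem scheme_mass_conservation_and_monotonicity_general
    (N : ℕ) (Δx Δt : ℝ) (hΔx : Δx = 1 / N) (hΔt : 0 < Δt)
    (α : ℝ) (V : Fin N → ℝ)
    (m1 m2 U' : ℝ → ℝ)
    (hm1_nonneg : ∀ s ∈ Icc 0 α, 0 ≤ m1 s) (hm1_mono : MonotoneOn m1 (Icc 0 α))
    (hm2_nonneg : ∀ s ∈ Icc 0 α, 0 ≤ m2 s) (hm2_anti : AntitoneOn m2 (Icc 0 α))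
    (hU'_mono : MonotoneOn U' (Icc 0 α))
    (lam : ℝ) (hlam : 0 ≤ lam) :
    (∀ ρ : Fin N → ℝ, (∀ i, ρ i ∈ Icc 0 α) →
        ∑ i, Hmap N Δx Δt V m1 m2 U' lam ρ i = ∑ i, ρ i) ∧
    (∀ i : Fin N, ∀ ρ σ : Fin N → ℝ,
        (∀ j, ρ j ∈ Icc 0 α) → (∀ j, σ j ∈ Icc 0 α) →
        σ i = ρ i → (∀ j, j ≠ i → ρ j ≤ σ j) →
        Hmap N Δx Δt V m1 m2 U' lam σ i ≤ Hmap N Δx Δt V m1 m2 U' lam ρ i) := by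
  have hΔx_nonneg : 0 ≤ Δx := hΔx ▸ by positivity
  exact ⟨fun ρ _ => sum_Hmap_eq_sum Δt lam ρ,
    fun i ρ σ hρ hσ hi hle => Hmap_le_Hmap hm1_nonneg hm1_mono hm2_nonneg hm2_anti hU'_mono
      hΔx_nonneg hΔt.le hlam hρ hσ hi hle⟩

/-- Mass conservation and off-diagonal monotonicity of the implicit upwind scheme. -/
theorem scheme_mass_conservation_and_monotonicity
    (N : ℕ) (hN : 2 ≤ N) (Δx Δt : ℝ) (hΔx : Δx = 1 / N) (hΔt : 0 < Δt)
    (α : ℝ) (hα : 0 < α) (V : Fin N → ℝ)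
    (m1 m2 U' : ℝ → ℝ)
    (hm1_nonneg : ∀ s ∈ Icc 0 α, 0 ≤ m1 s) (hm1_mono : MonotoneOn m1 (Icc 0 α))
    (hm2_nonneg : ∀ s ∈ Icc 0 α, 0 ≤ m2 s) (hm2_anti : AntitoneOn m2 (Icc 0 α))
    (hU'_mono : MonotoneOn U' (Icc 0 α))
    (lam : ℝ) (hlam : 0 ≤ lam) :
    (∀ ρ : Fin N → ℝ, (∀ i, ρ i ∈ Icc 0 α) →
        ∑ i, Hmap N Δx Δt V m1 m2 U' lam ρ i = ∑ i, ρ i) ∧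
    (∀ i : Fin N, ∀ ρ σ : Fin N → ℝ,
        (∀ j, ρ j ∈ Icc 0 α) → (∀ j, σ j ∈ Icc 0 α) →
        σ i = ρ i → (∀ j, j ≠ i → ρ j ≤ σ j) →
        Hmap N Δx Δt V m1 m2 U' lam σ i ≤ Hmap N Δx Δt V m1 m2 U' lam ρ i) :=
  scheme_mass_conservation_and_monotonicity_general N Δx Δt hΔx hΔt α V m1 m2 U' hm1_nonneg hm1_mono
    hm2_nonneg hm2_anti hU'_mono lam hlam
end
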